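/- arXiv:1703.01995 — 11 statements merged into one kernel-verified Lean document; each statement's English description precedes it below -/
import Mathlib

section
/- Let (x_i)_{i∈I} be a summable family of Hahn series in HahnSeries Γ R and let n ∈ ℕ. Then the family of products (∏_{m<n} x_{τ(m)}), indexed by all functions τ : Fin n → I, is summable, and (∑_{i∈I} x_i)^n = ∑_{τ : Fin n → I} ∏_{m<n} x_{τ(m)}. -/
/-- A family of Hahn series is summable if the union of supports is partially
well-ordered (equivalently, well-ordered, since `Γ` is linearly ordered) and each
exponent lies in the support of only finitely many members of the family. -/
def IsSummable {Γ R ι : Type*} [AddCommGroup Γ] [LinearOrder Γ] [IsOrderedAddMonoid Γ] [CommRing R]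
    (f : ι → HahnSeries Γ R) : Prop :=
  (⋃ i, (f i).support).IsPWO ∧ ∀ g : Γ, {i | (f i).coeff g ≠ 0}.Finite

/-- The sum of a summable family of Hahn series. -/
noncomputable def sumOf {Γ R ι : Type*} [AddCommGroup Γ] [LinearOrder Γ] [IsOrderedAddMonoid Γ] [CommRing R]
    (f : ι → HahnSeries Γ R) (hf : IsSummable f) : HahnSeries Γ R :=
  HahnSeries.SummableFamily.hsum ⟨f, hf.1, hf.2⟩

open HahnSeries SummableFamily in
/-- The summable family of `n`-fold products of members of a summable family. -/
noncomputable def piFam {Γ R I : Type*} [AddCommGroup Γ] [LinearOrder Γ] [IsOrderedAddMonoid Γ] [CommRing R]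
    (s : HahnSeries.SummableFamily Γ R I) :
    ∀ n : ℕ, HahnSeries.SummableFamily Γ R (Fin n → I)
  | 0 => HahnSeries.SummableFamily.Equiv
      (Equiv.ofUnique Unit (Fin 0 → I)) (HahnSeries.SummableFamily.single () 1)
  | n + 1 => HahnSeries.SummableFamily.Equiv
      (Fin.consEquiv fun _ : Fin (n + 1) => I)
      (HahnSeries.SummableFamily.smul s (piFam s n))

theorem piFam_apply {Γ R I : Type*} [AddCommGroup Γ] [LinearOrder Γ] [IsOrderedAddMonoid Γ] [CommRing R]
    (s : HahnSeries.SummableFamily Γ R I) (n : ℕ) (τ : Fin n → I) :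
    piFam s n τ = ∏ m : Fin n, s (τ m) := by
  induction n with
  | zero => rw [Finset.univ_eq_empty, Finset.prod_empty]; rfl
  | succ n ih =>
    show (HahnSeries.SummableFamily.smul s (piFam s n))
        ((Fin.consEquiv fun _ : Fin (n + 1) => I).symm τ) = _
    rw [HahnSeries.SummableFamily.smul_toFun,
      HahnSeries.of_symm_smul_of_eq_mul]
    rw [Fin.prod_univ_succ]
    congr 1
    exact ih _

theorem piFam_hsum {Γ R I : Type*} [AddCommGroup Γ] [LinearOrder Γ] [IsOrderedAddMonoid Γ] [CommRing R]
    (s : HahnSeries.SummableFamily Γ R I) (n : ℕ) :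
    (piFam s n).hsum = s.hsum ^ n := by
  induction n with
  | zero =>
    rw [piFam, HahnSeries.SummableFamily.hsum_equiv,
      HahnSeries.SummableFamily.hsum_single, pow_zero]
  | succ n ih =>
    rw [piFam, HahnSeries.SummableFamily.hsum_equiv,
      HahnSeries.SummableFamily.smul_hsum,
      HahnSeries.of_symm_smul_of_eq_mul, ih, pow_succ']

/-- The `n`-th power of the sum of a summable family `(x_i)_{i ∈ I}` equals the sum of
the summable family of products `∏_{m < n} x_{τ(m)}` indexed by all `τ : Fin n → I`. -/
theorem pow_of_sum {Γ R I : Type*} [AddCommGroup Γ] [LinearOrder Γ] [IsOrderedAddMonoid Γ] [CommRing R]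
    (f : I → HahnSeries Γ R) (hf : IsSummable f) (n : ℕ) :
    ∃ h : IsSummable (fun τ : Fin n → I => ∏ m : Fin n, f (τ m)),
      (sumOf f hf) ^ n = sumOf (fun τ : Fin n → I => ∏ m : Fin n, f (τ m)) h := by
  set s : HahnSeries.SummableFamily Γ R I := ⟨f, hf.1, hf.2⟩ with hs
  have hcoe : (fun τ : Fin n → I => ∏ m : Fin n, f (τ m)) = ⇑(piFam s n) := by
    funext τ
    rw [piFam_apply]
    rfl
  have h : IsSummable (fun τ : Fin n → I => ∏ m : Fin n, f (τ m)) := by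
    rw [hcoe]
    exact ⟨(piFam s n).isPWO_iUnion_support, (piFam s n).finite_co_support⟩
  refine ⟨h, ?_⟩
  have : (⟨fun τ : Fin n → I => ∏ m : Fin n, f (τ m), h.1, h.2⟩ :
      HahnSeries.SummableFamily Γ R (Fin n → I)) = piFam s n :=
    HahnSeries.SummableFamily.coe_injective hcoe
  show s.hsum ^ n = HahnSeries.SummableFamily.hsum _
  rw [this, piFam_hsum]
end

section
/- Let (a_i)_{i∈ℕ} be a sequence of Hahn series and ε a Hahn series in HahnSeries Γ R such that the family (a_i · ε^i)_{i∈ℕ} is summable. Then for every n ∈ ℕ the family ((∑_{i_1+⋯+i_n=k} a_{i_1} a_{i_2} ⋯ a_{i_n}) · ε^k)_{k∈ℕ} is summable, where for each k the inner sum ranges over the finitely many n-tuples (i_1,…,i_n) ∈ ℕ^n with i_1+⋯+i_n = k, and (∑_{i∈ℕ} a_i ε^i)^n = ∑_{k∈ℕ} (∑_{i_1+⋯+i_n=k} a_{i_1} a_{i_2} ⋯ a_{i_n}) ε^k. -/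
section PowAux

open Finset HahnSeries HahnSeries.SummableFamily

variable {Γ R : Type*} [AddCommGroup Γ] [LinearOrder Γ] [IsOrderedAddMonoid Γ] [CommRing R]

/-- Elementwise product of two summable families. -/
noncomputable def mulSF {α β : Type*} (s : SummableFamily Γ R α) (t : SummableFamily Γ R β) :
    SummableFamily Γ R (α × β) := SummableFamily.mul s t

lemma coeff_finsetSum {ι : Type*} (t : Finset ι) (f : ι → HahnSeries Γ R) (g : Γ) :
    (∑ i ∈ t, f i).coeff g = ∑ i ∈ t, (f i).coeff g :=
  map_sum (HahnSeries.coeff.addMonoidHom g) f t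

lemma mulSF_apply {α β : Type*} (s : SummableFamily Γ R α) (t : SummableFamily Γ R β)
    (ab : α × β) : mulSF s t ab = s ab.1 * t ab.2 := rfl

lemma hsum_mulSF {α β : Type*} (s : SummableFamily Γ R α) (t : SummableFamily Γ R β) :
    (mulSF s t).hsum = s.hsum * t.hsum := by
  rw [mulSF, hsum_mul]

/-- Grouping a summable family along a map with finite fibers. -/
noncomputable def groupSF {ι κ : Type*} (S : SummableFamily Γ R ι) (π : ι → κ)
    (hfib : ∀ k, (π ⁻¹' {k}).Finite) : SummableFamily Γ R κ where
  toFun k := ∑ i ∈ (hfib k).toFinset, S i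
  isPWO_iUnion_support' := by
    refine S.isPWO_iUnion_support.mono ?_
    refine Set.iUnion_subset fun k g hg => ?_
    rw [HahnSeries.mem_support] at hg
    have : (∑ i ∈ (hfib k).toFinset, S i).coeff g = ∑ i ∈ (hfib k).toFinset, (S i).coeff g := coeff_finsetSum _ _ _
    rw [this] at hg
    obtain ⟨i, _, hi⟩ := Finset.exists_ne_zero_of_sum_ne_zero hg
    exact Set.mem_iUnion.2 ⟨i, hi⟩
  finite_co_support' g := by
    apply ((S.finite_co_support' g).image π).subset
    intro k hk
    simp only [Set.mem_setOf_eq] at hk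
    have : (∑ i ∈ (hfib k).toFinset, S i).coeff g = ∑ i ∈ (hfib k).toFinset, (S i).coeff g := coeff_finsetSum _ _ _
    rw [this] at hk
    obtain ⟨i, hik, hi⟩ := Finset.exists_ne_zero_of_sum_ne_zero hk
    exact ⟨i, hi, (hfib k).mem_toFinset.1 hik⟩

lemma hsum_groupSF {ι κ : Type*} (S : SummableFamily Γ R ι) (π : ι → κ)
    (hfib : ∀ k, (π ⁻¹' {k}).Finite) : (groupSF S π hfib).hsum = S.hsum := by
  ext g
  classical
  set F : Finset ι := (S.finite_co_support' g).toFinset with hF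
  set K : Finset κ := F.image π with hK
  have hR : S.hsum.coeff g = ∑ i ∈ F, (S i).coeff g :=
    coeff_hsum_eq_sum_of_subset (by intro i hi; exact (S.finite_co_support' g).mem_toFinset.2 hi)
  have hL : (groupSF S π hfib).hsum.coeff g
      = ∑ k ∈ K, ((groupSF S π hfib) k).coeff g := by
    refine coeff_hsum_eq_sum_of_subset ?_
    intro k hk
    simp only [Set.mem_setOf_eq] at hk
    have : ((groupSF S π hfib) k).coeff g = ∑ i ∈ (hfib k).toFinset, (S i).coeff g := coeff_finsetSum _ _ _
    rw [this] at hk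
    obtain ⟨i, hik, hi⟩ := Finset.exists_ne_zero_of_sum_ne_zero hk
    exact Finset.mem_image.2 ⟨i, (S.finite_co_support' g).mem_toFinset.2 hi,
      (hfib k).mem_toFinset.1 hik⟩
  rw [hL, hR]
  have hstep : ∀ k ∈ K, ((groupSF S π hfib) k).coeff g
      = ∑ i ∈ F.filter (fun i => π i = k), (S i).coeff g := by
    intro k _
    have : ((groupSF S π hfib) k).coeff g = ∑ i ∈ (hfib k).toFinset, (S i).coeff g := coeff_finsetSum _ _ _
    rw [this]
    refine (Finset.sum_subset ?_ ?_).symm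
    · intro i hi
      rw [Finset.mem_filter] at hi
      exact (hfib k).mem_toFinset.2 hi.2
    · intro i hi hni
      by_contra hne
      exact hni (Finset.mem_filter.2 ⟨(S.finite_co_support' g).mem_toFinset.2 hne,
        (hfib k).mem_toFinset.1 hi⟩)
  rw [Finset.sum_congr rfl hstep]
  exact Finset.sum_fiberwise_of_maps_to (fun i hi => Finset.mem_image_of_mem π hi) _
noncomputable def piSF (a : ℕ → HahnSeries Γ R) (ε : HahnSeries Γ R)
    (hf : IsSummable (fun i : ℕ => a i * ε ^ i)) : (n : ℕ) → SummableFamily Γ R (Fin n → ℕ)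
  | 0 => SummableFamily.Equiv (Equiv.ofUnique Unit (Fin 0 → ℕ)) (SummableFamily.single () 1)
  | n + 1 => SummableFamily.Equiv (Fin.consEquiv fun _ : Fin (n + 1) => ℕ)
      (mulSF ⟨_, hf.1, hf.2⟩ (piSF a ε hf n))

lemma piSF_apply (a : ℕ → HahnSeries Γ R) (ε : HahnSeries Γ R)
    (hf : IsSummable (fun i : ℕ => a i * ε ^ i)) :
    ∀ (n : ℕ) (p : Fin n → ℕ), piSF a ε hf n p = ∏ m, (a (p m) * ε ^ p m)
  | 0, p => by simp [piSF]
  | n + 1, p => by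
    have h := piSF_apply a ε hf n (Fin.tail p)
    show (mulSF _ _) ((Fin.consEquiv fun _ : Fin (n + 1) => ℕ).symm p) = _
    rw [mulSF_apply]
    simp only [Fin.consEquiv_symm_apply]
    rw [h, Fin.prod_univ_succ]
    rfl

lemma hsum_piSF (a : ℕ → HahnSeries Γ R) (ε : HahnSeries Γ R)
    (hf : IsSummable (fun i : ℕ => a i * ε ^ i)) (n : ℕ) :
    (piSF a ε hf n).hsum
      = (⟨_, hf.1, hf.2⟩ : SummableFamily Γ R ℕ).hsum ^ n := by
  induction n with
  | zero => simp [piSF]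
  | succ n ih =>
    show (SummableFamily.Equiv _ (mulSF _ (piSF a ε hf n))).hsum = _
    rw [hsum_equiv, hsum_mulSF, ih, pow_succ']

end PowAux

open Finset HahnSeries HahnSeries.SummableFamily in
/-- If `(a_i ε^i)_{i ∈ ℕ}` is summable, then for every `n`,
`(∑_i a_i ε^i)^n = ∑_k (∑_{i₁+⋯+iₙ=k} a_{i₁} ⋯ a_{iₙ}) ε^k`, the family on the
right-hand side being summable.  The inner sum ranges over the finitely many
`n`-tuples of naturals with sum `k` (`Finset.Nat.antidiagonalTuple n k`). -/
theorem pow_of_power_series {Γ R : Type*} [AddCommGroup Γ] [LinearOrder Γ] [IsOrderedAddMonoid Γ] [CommRing R]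
    (a : ℕ → HahnSeries Γ R) (ε : HahnSeries Γ R)
    (hf : IsSummable (fun i : ℕ => a i * ε ^ i)) (n : ℕ) :
    ∃ h : IsSummable (fun k : ℕ =>
        (∑ p ∈ Finset.Nat.antidiagonalTuple n k, ∏ m : Fin n, a (p m)) * ε ^ k),
      (sumOf (fun i : ℕ => a i * ε ^ i) hf) ^ n =
        sumOf (fun k : ℕ =>
          (∑ p ∈ Finset.Nat.antidiagonalTuple n k, ∏ m : Fin n, a (p m)) * ε ^ k) h := by
  classical
  have hfib : ∀ k : ℕ, ((fun p : Fin n → ℕ => ∑ m, p m) ⁻¹' {k}).Finite := fun k => by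
    apply (Finset.Nat.antidiagonalTuple n k).finite_toSet.subset
    intro p hp
    simpa [Finset.Nat.mem_antidiagonalTuple] using hp
  set S := piSF a ε hf n with hS
  set G := groupSF S _ hfib with hG
  have hGk : ∀ k, G k
      = (∑ p ∈ Finset.Nat.antidiagonalTuple n k, ∏ m : Fin n, a (p m)) * ε ^ k := by
    intro k
    show ∑ i ∈ (hfib k).toFinset, S i = _
    have hset : (hfib k).toFinset = Finset.Nat.antidiagonalTuple n k := by
      ext p
      simp [Finset.Nat.mem_antidiagonalTuple, Set.Finite.mem_toFinset]
    rw [hset, Finset.sum_mul]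
    refine Finset.sum_congr rfl fun p hp => ?_
    rw [hS, piSF_apply, Finset.prod_mul_distrib, Finset.prod_pow_eq_pow_sum,
      Finset.Nat.mem_antidiagonalTuple.1 hp]
  have hfun : (fun k : ℕ =>
      (∑ p ∈ Finset.Nat.antidiagonalTuple n k, ∏ m : Fin n, a (p m)) * ε ^ k) = ⇑G :=
    funext fun k => (hGk k).symm
  rw [hfun]
  refine ⟨⟨G.isPWO_iUnion_support, G.finite_co_support'⟩, ?_⟩
  have h1 : sumOf (⇑G) ⟨G.isPWO_iUnion_support, G.finite_co_support'⟩ = G.hsum := rfl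
  have h2 : sumOf (fun i : ℕ => a i * ε ^ i) hf
      = (⟨_, hf.1, hf.2⟩ : SummableFamily Γ R ℕ).hsum := rfl
  rw [h1, h2, hG, hsum_groupSF, hS, hsum_piSF]
end

section
/- Let Γ be a linearly ordered (additive) abelian group, and let A, S ⊆ Γ be subsets such that S is well-ordered (every nonempty subset of S has a least element) and such that a' < a + s for all a, a' ∈ A and all s ∈ S. Let (a_i)_{i∈ℕ} be a sequence in A, let (k_i)_{i∈ℕ} be a sequence of natural numbers with k_i → ∞ as i → ∞, and for each i ∈ ℕ let s_{i,0}, …, s_{i,k_i} be elements of S (not necessarily distinct). Set v_i := a_i + s_{i,0} + s_{i,1} + ⋯ + s_{i,k_i}. Then there is no strictly increasing sequence of indices i_0 < i_1 < i_2 < ⋯ in ℕ such that v_{i_0} ≥ v_{i_1} ≥ v_{i_2} ≥ ⋯; equivalently, the family of monomials (T^{v_i})_{i∈ℕ} is a summable family of Hahn series over Γ. -/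
private lemma sum_le_of_sublistForall₂ {Γ : Type*} [AddCommGroup Γ] [LinearOrder Γ] [IsOrderedAddMonoid Γ]
    {l l' : List Γ} (h : List.SublistForall₂ (· ≤ ·) l l') :
    (∀ x ∈ l', 0 ≤ x) → l.sum ≤ l'.sum := by
  induction h with
  | nil => intro h0; simpa using List.sum_nonneg h0
  | @cons a b l₁ l₂ hab hsub ih =>
      intro h0
      simp only [List.sum_cons]
      exact add_le_add hab (ih fun x hx => h0 x (List.mem_cons_of_mem _ hx))
  | @cons_right b l₁ l₂ hsub ih =>
      intro h0
      have hb : 0 ≤ b := h0 b (List.mem_cons_self)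
      have := ih fun x hx => h0 x (List.mem_cons_of_mem _ hx)
      simp only [List.sum_cons]
      exact this.trans (le_add_of_nonneg_left hb)

private lemma sum_add_le_of_sublistForall₂ {Γ : Type*} [AddCommGroup Γ] [LinearOrder Γ] [IsOrderedAddMonoid Γ]
    {s₀ : Γ} {l l' : List Γ} (h : List.SublistForall₂ (· ≤ ·) l l') :
    (∀ x ∈ l', s₀ ≤ x) → 0 < s₀ → l.length < l'.length → l.sum + s₀ ≤ l'.sum := by
  induction h with
  | @nil l₂ =>
      intro hb hpos hlen
      cases l₂ with
      | nil => simp at hlen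
      | cons b t =>
          have hbs : s₀ ≤ b := hb b (List.mem_cons_self)
          have ht : 0 ≤ t.sum :=
            List.sum_nonneg fun x hx =>
              le_trans hpos.le (hb x (List.mem_cons_of_mem _ hx))
          simp only [List.sum_nil, List.sum_cons, zero_add]
          exact le_add_of_le_of_nonneg hbs ht
  | @cons a b l₁ l₂ hab hsub ih =>
      intro hb hpos hlen
      simp only [List.length_cons, Nat.succ_lt_succ_iff] at hlen
      have := ih (fun x hx => hb x (List.mem_cons_of_mem _ hx)) hpos hlen
      simp only [List.sum_cons]
      calc a + l₁.sum + s₀ = a + (l₁.sum + s₀) := by rw [add_assoc]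
        _ ≤ b + l₂.sum := add_le_add hab this
  | @cons_right b l₁ l₂ hsub ih =>
      intro hb hpos hlen
      have hb' : ∀ x ∈ l₂, s₀ ≤ x := fun x hx => hb x (List.mem_cons_of_mem _ hx)
      have hbs : s₀ ≤ b := hb b (List.mem_cons_self)
      simp only [List.length_cons, Nat.lt_succ_iff] at hlen
      rcases lt_or_eq_of_le hlen with hlt | heq
      · have := ih hb' hpos hlt
        simp only [List.sum_cons]
        exact this.trans (le_add_of_nonneg_left (hpos.le.trans hbs))
      · have := sum_le_of_sublistForall₂ hsub fun x hx => le_trans hpos.le (hb' x hx)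
        simp only [List.sum_cons]
        exact (add_le_add this hbs).trans_eq (add_comm _ _)

private lemma exists_strictMono_subseq (u : ℕ → ℕ)
    (hu : Filter.Tendsto u Filter.atTop Filter.atTop) :
    ∃ ψ : ℕ → ℕ, StrictMono ψ ∧ StrictMono (u ∘ ψ) := by
  have h : ∀ n : ℕ, ∃ m, n < m ∧ u n < u m := fun n =>
    ((Filter.eventually_gt_atTop n).and
      (hu.eventually (Filter.eventually_gt_atTop (u n)))).exists
  choose f hf1 hf2 using h
  refine ⟨fun n => f^[n] 0, strictMono_nat_of_lt_succ ?_, strictMono_nat_of_lt_succ ?_⟩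
  · intro n; rw [Function.iterate_succ_apply']; exact hf1 _
  · intro n
    show u (f^[n] 0) < u (f^[n + 1] 0)
    rw [Function.iterate_succ_apply']
    exact hf2 _

/-- Variant of Neumann's lemma (order-mirrored form).  If `S` is well-ordered,
`a' < a + s` for all `a, a' ∈ A` and `s ∈ S`, `(a_i)` is a sequence in `A`,
`(k_i)` tends to infinity, and `s_{i,0}, …, s_{i,k_i} ∈ S`, then setting
`v_i = a_i + s_{i,0} + ⋯ + s_{i,k_i}`, there is no strictly increasing sequence of
indices along which the `v`'s are weakly decreasing; equivalently, the family of
monomials `(T^{v_i})_{i ∈ ℕ}` is summable. -/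
theorem neumann_variant {Γ : Type*} [AddCommGroup Γ] [LinearOrder Γ] [IsOrderedAddMonoid Γ]
    (A S : Set Γ) (hS : S.IsWF)
    (hAS : ∀ a ∈ A, ∀ a' ∈ A, ∀ s ∈ S, a' < a + s)
    (a : ℕ → Γ) (ha : ∀ i, a i ∈ A)
    (k : ℕ → ℕ) (hk : Filter.Tendsto k Filter.atTop Filter.atTop)
    (s : (i : ℕ) → Fin (k i + 1) → Γ) (hs : ∀ i j, s i j ∈ S) :
    (¬ ∃ φ : ℕ → ℕ, StrictMono φ ∧
        ∀ n : ℕ, a (φ (n + 1)) + ∑ j, s (φ (n + 1)) j ≤ a (φ n) + ∑ j, s (φ n) j) ∧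
      IsSummable (fun i : ℕ =>
        HahnSeries.single (a i + ∑ j, s i j) (1 : ℝ)) := by
  set v : ℕ → Γ := fun i => a i + ∑ j, s i j with hv
  have hSne : S.Nonempty := ⟨s 0 0, hs 0 0⟩
  set s₀ : Γ := hS.min hSne with hs₀
  have hs₀S : s₀ ∈ S := hS.min_mem hSne
  have hs₀pos : 0 < s₀ := by
    have := hAS (a 0) (ha 0) (a 0) (ha 0) s₀ hs₀S
    exact (lt_add_iff_pos_right _).mp this
  have hs₀le : ∀ x ∈ S, s₀ ≤ x := fun x hx => hS.min_le hSne hx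
  -- The key statement: no weakly decreasing subsequence of `v`.
  have key : ¬ ∃ φ : ℕ → ℕ, StrictMono φ ∧ ∀ n : ℕ, v (φ (n + 1)) ≤ v (φ n) := by
    rintro ⟨φ, hφ, hdec⟩
    have hanti : Antitone (v ∘ φ) := antitone_nat_of_succ_le hdec
    obtain ⟨ψ, hψ, hkψ⟩ := exists_strictMono_subseq (k ∘ φ) (hk.comp hφ.tendsto_atTop)
    set φ' : ℕ → ℕ := φ ∘ ψ with hφ'
    set L : ℕ → List Γ := fun n => List.ofFn (s (φ' n)) with hL
    have hLmem : ∀ n, L n ∈ {l : List Γ | ∀ x ∈ l, x ∈ S} := by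
      intro n x hx
      rw [hL, List.mem_ofFn] at hx
      obtain ⟨j, rfl⟩ := hx
      exact hs _ _
    have hig := Set.PartiallyWellOrderedOn.partiallyWellOrderedOn_sublistForall₂
      (α := Γ) (· ≤ ·) hS.isPWO
    obtain ⟨m, n, hmn, hsub⟩ := hig.exists_lt (f := L) hLmem
    have hlen : (L m).length < (L n).length := by
      simp only [hL, List.length_ofFn]
      exact Nat.succ_lt_succ (hkψ hmn)
    have hsum : (L m).sum + s₀ ≤ (L n).sum :=
      sum_add_le_of_sublistForall₂ hsub
        (fun x hx => hs₀le x (hLmem n x hx)) hs₀pos hlen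
    have hLsum : ∀ p, (L p).sum = ∑ j, s (φ' p) j := by
      intro p; rw [hL]; exact List.sum_ofFn
    have h1 : v (φ' m) < v (φ' n) := by
      have haa : a (φ' m) < a (φ' n) + s₀ :=
        hAS (a (φ' n)) (ha _) (a (φ' m)) (ha _) s₀ hs₀S
      calc v (φ' m) = a (φ' m) + (L m).sum := by rw [hLsum]
        _ < (a (φ' n) + s₀) + (L m).sum := add_lt_add_left haa _
        _ = a (φ' n) + ((L m).sum + s₀) := by
            rw [add_assoc, add_comm s₀]
        _ ≤ a (φ' n) + (L n).sum := add_le_add_right hsum _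
        _ = v (φ' n) := by rw [hLsum]
    have h2 : v (φ' n) ≤ v (φ' m) := hanti (hψ.monotone hmn.le)
    exact absurd h2 (not_le.mpr h1)
  refine ⟨key, ?_, ?_⟩
  · -- PWO of the union of supports
    have hsupp : (⋃ i, (HahnSeries.single (v i) (1 : ℝ)).support) = Set.range v := by
      have : ∀ i : ℕ, (HahnSeries.single (v i) (1 : ℝ)).support = {v i} := fun i =>
        HahnSeries.support_single_of_ne one_ne_zero
      simp only [this]
      exact Set.iUnion_singleton_eq_range v
    rw [hsupp, Set.isPWO_iff_isWF]
    rw [Set.isWF_iff_no_descending_seq]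
    intro f hf hmem
    have hmem' : ∀ p : ℕ, ∃ i, v i = f p := fun p => hmem p
    choose i hi using hmem'
    have hinj : Function.Injective i := fun p q hpq =>
      hf.injective (by rw [← hi, ← hi, hpq])
    have hten : Filter.Tendsto i Filter.atTop Filter.atTop :=
      Nat.cofinite_eq_atTop ▸ hinj.tendsto_cofinite
    obtain ⟨ψ, hψ, hiψ⟩ := exists_strictMono_subseq i hten
    exact key ⟨i ∘ ψ, hiψ, fun p => by
      show v (i (ψ (p + 1))) ≤ v (i (ψ p))
      rw [hi, hi]
      exact (hf.antitone (hψ (Nat.lt_succ_self p)).le)⟩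
  · -- finiteness of vertical slices
    intro g
    by_contra hinf
    have hinf' : {i : ℕ | (HahnSeries.single (v i) (1 : ℝ)).coeff g ≠ 0}.Infinite := hinf
    set e := hinf'.natEmbedding with he
    set i : ℕ → ℕ := fun p => (e p : ℕ) with hi
    have hvg : ∀ p, v (i p) = g := by
      intro p
      have h2 := (e p).2
      simp only [Set.mem_setOf_eq, HahnSeries.coeff_single] at h2
      by_cases hc : g = v (i p)
      · exact hc.symm
      · rw [if_neg hc] at h2; exact absurd rfl h2
    have hinj : Function.Injective i := fun p q hpq =>
      e.injective (Subtype.ext hpq)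
    have hten : Filter.Tendsto i Filter.atTop Filter.atTop :=
      Nat.cofinite_eq_atTop ▸ hinj.tendsto_cofinite
    obtain ⟨ψ, hψ, hiψ⟩ := exists_strictMono_subseq i hten
    exact key ⟨i ∘ ψ, hiψ, fun p => by
      show v (i (ψ (p + 1))) ≤ v (i (ψ p))
      rw [hvg, hvg]⟩
end

section
/- Let Γ be a linearly ordered (additive) abelian group, R a commutative ring, and let A, S ⊆ Γ be subsets such that a' < a + s for all a, a' ∈ A and all s ∈ S. Let (a_i)_{i∈ℕ} be a sequence of Hahn series in HahnSeries Γ R with supp(a_i) ⊆ A for every i, and let ε ∈ HahnSeries Γ R with supp(ε) ⊆ S. Then the family (a_i · ε^i)_{i∈ℕ} is summable. -/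
open Pointwise

section psAux

variable {Γ : Type*} [AddCommGroup Γ] [LinearOrder Γ] [IsOrderedAddMonoid Γ]

/-- `psAux_itSum S n` is the `n`-fold pointwise sumset of `S` (with `psAux_itSum S 0 = {0}`). -/
def psAux_itSum (S : Set Γ) : ℕ → Set Γ
  | 0 => {0}
  | n + 1 => S + psAux_itSum S n

theorem psAux_itSum_zero (S : Set Γ) : psAux_itSum S 0 = {0} := rfl

theorem psAux_itSum_succ (S : Set Γ) (n : ℕ) :
    psAux_itSum S (n + 1) = S + psAux_itSum S n := rfl

theorem psAux_itSum_subset_closure (S : Set Γ) :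
    ∀ n, psAux_itSum S n ⊆ (AddSubmonoid.closure S : Set Γ) := by
  intro n
  induction n with
  | zero =>
    rintro x hx
    rw [psAux_itSum_zero, Set.mem_singleton_iff] at hx
    subst hx
    exact AddSubmonoid.zero_mem _
  | succ n ih =>
    rintro x hx
    rw [psAux_itSum_succ] at hx
    obtain ⟨s, hs, v, hv, rfl⟩ := Set.mem_add.1 hx
    exact AddSubmonoid.add_mem _ (AddSubmonoid.subset_closure hs) (ih hv)

theorem psAux_support_pow_subset {R : Type*} [CommRing R] (ε : HahnSeries Γ R) :
    ∀ n, (ε ^ n).support ⊆ psAux_itSum ε.support n := by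
  intro n
  induction n with
  | zero =>
    rw [pow_zero, psAux_itSum_zero]
    have : (1 : HahnSeries Γ R) = HahnSeries.single 0 1 := rfl
    rw [this]
    exact HahnSeries.support_single_subset
  | succ n ih =>
    rw [pow_succ']
    refine (HahnSeries.support_mul_subset).trans ?_
    rw [psAux_itSum_succ]
    exact Set.add_subset_add Set.Subset.rfl ih

/-- The "peel" step: from a bad sequence we produce a new bad sequence whose
sumset components all lie strictly below `w 1`. -/
theorem psAux_peel (A S : Set Γ) (S' : Set Γ) (hS'S : S' ⊆ S) (hS' : S'.IsPWO)
    (hAS : ∀ a ∈ A, ∀ a' ∈ A, ∀ s ∈ S, a' < a + s)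
    (x w : ℕ → Γ) (m : ℕ → ℕ)
    (hx : ∀ k, x k ∈ A) (hw : ∀ k, w k ∈ psAux_itSum S' (m k))
    (hm : StrictMono m) (hanti : Antitone fun k => x k + w k) :
    ∃ (X W : ℕ → Γ) (M : ℕ → ℕ),
      (∀ k, X k ∈ A) ∧ (∀ k, W k ∈ psAux_itSum S' (M k)) ∧ StrictMono M ∧
        (Antitone fun k => X k + W k) ∧ ∀ k, W k < w 1 := by
  have hm1 : ∀ k, 1 ≤ k → 1 ≤ m k := fun k hk =>
    Nat.one_le_iff_ne_zero.2 (by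
      have : m 0 < m k := hm (Nat.lt_of_lt_of_le Nat.zero_lt_one hk)
      omega)
  have hdec : ∀ k, ∃ s v : Γ, 1 ≤ k →
      s ∈ S' ∧ v ∈ psAux_itSum S' (m k - 1) ∧ s + v = w k := by
    intro k
    rcases Nat.lt_or_ge k 1 with hk | hk
    · exact ⟨0, 0, fun h => absurd h (by omega)⟩
    · have h1 := hm1 k hk
      have hrw : m k = (m k - 1) + 1 := by omega
      have := hw k
      rw [hrw, psAux_itSum_succ] at this
      obtain ⟨s, hs, v, hv, hsv⟩ := Set.mem_add.1 this
      exact ⟨s, v, fun _ => ⟨hs, hv, hsv⟩⟩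
  choose s v hsv using hdec
  obtain ⟨g, hg⟩ := hS'.exists_monotone_subseq (f := fun l => s (l + 2))
    (fun l => (hsv (l + 2) (by omega)).1)
  set K : ℕ → ℕ := fun l => g l + 2 with hK
  have hK2 : ∀ l, 2 ≤ K l := fun l => by simp [hK]
  have hKmono : StrictMono K := fun l l' h => by
    simp only [hK]
    exact Nat.add_lt_add_right (g.strictMono h) 2
  have hprop : ∀ l, s (K l) ∈ S' ∧ v (K l) ∈ psAux_itSum S' (m (K l) - 1) ∧
      s (K l) + v (K l) = w (K l) := fun l => hsv (K l) (by have := hK2 l; omega)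
  refine ⟨fun l => x (K l), fun l => v (K l), fun l => m (K l) - 1,
    fun l => hx _, fun l => (hprop l).2.1, ?_, ?_, ?_⟩
  · intro l l' h
    have h1 : 1 ≤ m (K l) := hm1 _ (by have := hK2 l; omega)
    have h2 : m (K l) < m (K l') := hm (hKmono h)
    show m (K l) - 1 < m (K l') - 1
    omega
  · intro l l' h
    have hy : x (K l') + w (K l') ≤ x (K l) + w (K l) := hanti (hKmono.monotone h)
    have hs : s (K l) ≤ s (K l') := hg h
    have e1 : x (K l) + v (K l) = (x (K l) + w (K l)) - s (K l) := by
      rw [← (hprop l).2.2]; abel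
    have e2 : x (K l') + v (K l') = (x (K l') + w (K l')) - s (K l') := by
      rw [← (hprop l').2.2]; abel
    show x (K l') + v (K l') ≤ x (K l) + v (K l)
    rw [e1, e2]
    exact sub_le_sub hy hs
  · intro l
    have hx1 : x 1 < x (K l) + s (K l) :=
      hAS _ (hx (K l)) _ (hx 1) _ (hS'S (hprop l).1)
    have hy : x (K l) + w (K l) ≤ x 1 + w 1 := hanti (by have := hK2 l; omega)
    have : x (K l) + (s (K l) + v (K l)) < x (K l) + (s (K l) + w 1) := by
      rw [(hprop l).2.2]
      calc x (K l) + w (K l) ≤ x 1 + w 1 := hy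
        _ < (x (K l) + s (K l)) + w 1 := by exact add_lt_add_left hx1 _
        _ = x (K l) + (s (K l) + w 1) := by abel
    have := lt_of_add_lt_add_left this
    exact lt_of_add_lt_add_left this

/-- No "bad sequence" exists: there is no sequence of points of `A` plus
elements of `m k`-fold sumsets of `S' ⊆ S` with strictly increasing `m`
whose sums are non-increasing. -/
theorem psAux_key (A S : Set Γ) (S' : Set Γ) (hS'S : S' ⊆ S) (hS' : S'.IsPWO)
    (hAS : ∀ a ∈ A, ∀ a' ∈ A, ∀ s ∈ S, a' < a + s)
    (x w : ℕ → Γ) (m : ℕ → ℕ)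
    (hx : ∀ k, x k ∈ A) (hw : ∀ k, w k ∈ psAux_itSum S' (m k))
    (hm : StrictMono m) (hanti : Antitone fun k => x k + w k) : False := by
  have hpos : ∀ g ∈ S', 0 ≤ g := by
    intro g hg
    have := hAS (x 0) (hx 0) (x 0) (hx 0) g (hS'S hg)
    exact le_of_lt ((lt_add_iff_pos_right _).1 this)
  have hT : (AddSubmonoid.closure S' : Set Γ).IsPWO := hS'.addSubmonoid_closure hpos
  have inner : ∀ t ∈ (AddSubmonoid.closure S' : Set Γ), ∀ (x w : ℕ → Γ) (m : ℕ → ℕ),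
      (∀ k, x k ∈ A) → (∀ k, w k ∈ psAux_itSum S' (m k)) → StrictMono m →
      (Antitone fun k => x k + w k) → (∀ k, w k < t) → False := by
    intro t ht
    refine Set.WellFoundedOn.induction (P := fun t => ∀ (x w : ℕ → Γ) (m : ℕ → ℕ),
        (∀ k, x k ∈ A) → (∀ k, w k ∈ psAux_itSum S' (m k)) → StrictMono m →
        (Antitone fun k => x k + w k) → (∀ k, w k < t) → False) hT.isWF ht ?_
    intro y _ IH x w m hx hw hm hanti hbound
    obtain ⟨X, W, M, hX, hW, hM, hAnti, hlt⟩ :=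
      psAux_peel A S S' hS'S hS' hAS x w m hx hw hm hanti
    exact IH (w 1) (psAux_itSum_subset_closure S' (m 1) (hw 1)) (hbound 1)
      X W M hX hW hM hAnti hlt
  obtain ⟨X, W, M, hX, hW, hM, hAnti, hlt⟩ :=
    psAux_peel A S S' hS'S hS' hAS x w m hx hw hm hanti
  exact inner (w 1) (psAux_itSum_subset_closure S' (m 1) (hw 1))
    X W M hX hW hM hAnti hlt

end psAux

/-- Any sequence of naturals has either an infinite fiber or a subsequence on
which it is strictly increasing. -/
theorem psAux_extract (g : ℕ → ℕ) :
    (∃ N, {k | g k = N}.Infinite) ∨ ∃ φ : ℕ → ℕ, StrictMono φ ∧ StrictMono (g ∘ φ) := by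
  by_cases h : ∃ N, {k | g k = N}.Infinite
  · exact Or.inl h
  · push_neg at h
    right
    have hfib : ∀ N, {k | g k = N}.Finite := by
      intro N
      by_contra hc
      exact hc (h N)
    have hle : ∀ N, {k | g k ≤ N}.Finite := by
      intro N
      have : {k | g k ≤ N} ⊆ ⋃ i ∈ Finset.range (N + 1), {k | g k = i} := by
        intro k hk
        exact Set.mem_biUnion (Finset.mem_range.2 (Nat.lt_succ_of_le hk)) rfl
      exact (Set.Finite.biUnion (Finset.range (N + 1)).finite_toSet
        (fun i _ => hfib i)).subset this
    have step : ∀ c N, ∃ j, c < j ∧ N < g j := by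
      intro c N
      obtain ⟨b, hb⟩ := ((hle N).union (Set.finite_le_nat c)).bddAbove
      refine ⟨b + 1, ?_, ?_⟩
      · have : c ∈ {k | g k ≤ N} ∪ {k | k ≤ c} := Or.inr (by simp)
        have := hb this
        omega
      · by_contra hc
        push_neg at hc
        have : b + 1 ∈ {k | g k ≤ N} ∪ {k | k ≤ c} := Or.inl hc
        have := hb this
        omega
    choose nxt h1 h2 using step
    set φ : ℕ → ℕ := fun n => Nat.rec 0 (fun _ p => nxt p (g p)) n with hφ
    have hsucc : ∀ n, φ (n + 1) = nxt (φ n) (g (φ n)) := fun n => rfl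
    refine ⟨φ, strictMono_nat_of_lt_succ fun n => ?_, strictMono_nat_of_lt_succ fun n => ?_⟩
    · rw [hsucc]; exact h1 _ _
    · show g (φ n) < g (φ (n + 1))
      rw [hsucc]; exact h2 _ _

theorem power_series_summable' {Γ R : Type*} [AddCommGroup Γ] [LinearOrder Γ] [IsOrderedAddMonoid Γ] [CommRing R]
    (A S : Set Γ)
    (hAS : ∀ a ∈ A, ∀ a' ∈ A, ∀ s ∈ S, a' < a + s)
    (a : ℕ → HahnSeries Γ R) (ha : ∀ i, (a i).support ⊆ A)
    (ε : HahnSeries Γ R) (hε : ε.support ⊆ S) :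
    ((⋃ i, ((fun i : ℕ => a i * ε ^ i) i).support).IsPWO ∧
      ∀ g : Γ, {i | ((fun i : ℕ => a i * ε ^ i) i).coeff g ≠ 0}.Finite) := by
  classical
  have hdecomp : ∀ (n : ℕ) (y : Γ), y ∈ (a n * ε ^ n).support →
      ∃ x w : Γ, x ∈ A ∧ w ∈ psAux_itSum ε.support n ∧ x + w = y := by
    intro n y hy
    have h1 : y ∈ (a n).support + (ε ^ n).support :=
      HahnSeries.support_mul_subset hy
    obtain ⟨xk, hxk, wk, hwk, hsum⟩ := Set.mem_add.1 h1
    exact ⟨xk, wk, ha n hxk, psAux_support_pow_subset ε n hwk, hsum⟩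
  constructor
  · rw [Set.isPWO_iff_isWF, Set.isWF_iff_no_descending_seq]
    intro f hf hmem
    have hmem' : ∀ k, f k ∈ ⋃ i, (a i * ε ^ i).support := fun k => hmem k
    choose n hn using fun k => Set.mem_iUnion.1 (hmem' k)
    choose X W hX hW hXW using fun k => hdecomp (n k) (f k) (hn k)
    rcases psAux_extract n with ⟨N, hN⟩ | ⟨φ, hφ, hnφ⟩
    · haveI := hN.to_subtype
      set e := Nat.orderEmbeddingOfSet {k | n k = N} with he
      have hemem : ∀ l, n (e l) = N := by
        intro l
        have : e l ∈ {k | n k = N} := by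
          rw [← Nat.orderEmbeddingOfSet_range {k | n k = N}]
          exact Set.mem_range_self l
        exact this
      have hanti : StrictAnti fun l => f (e l) := fun l l' h => hf (e.strictMono h)
      refine Set.isWF_iff_no_descending_seq.1 (a N * ε ^ N).isWF_support _ hanti ?_
      intro l
      have := hn (e l)
      rw [hemem l] at this
      exact this
    · refine psAux_key A S ε.support hε ε.isPWO_support hAS
        (fun l => X (φ l)) (fun l => W (φ l)) (fun l => n (φ l))
        (fun l => hX (φ l)) (fun l => hW (φ l)) hnφ ?_
      have : StrictAnti fun l => X (φ l) + W (φ l) := by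
        intro l l' h
        show X (φ l') + W (φ l') < X (φ l) + W (φ l)
        rw [hXW, hXW]
        exact hf (hφ h)
      exact this.antitone
  · intro g0
    by_contra hinf
    have hinf' : {i | (a i * ε ^ i).coeff g0 ≠ 0}.Infinite := hinf
    haveI := hinf'.to_subtype
    set e := Nat.orderEmbeddingOfSet {i | (a i * ε ^ i).coeff g0 ≠ 0} with he
    have hemem : ∀ l, (a (e l) * ε ^ (e l)).coeff g0 ≠ 0 := by
      intro l
      have : e l ∈ {i | (a i * ε ^ i).coeff g0 ≠ 0} := by
        rw [← Nat.orderEmbeddingOfSet_range {i | (a i * ε ^ i).coeff g0 ≠ 0}]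
        exact Set.mem_range_self l
      exact this
    choose X W hX hW hXW using fun l => hdecomp (e l) g0 (hemem l)
    refine psAux_key A S ε.support hε ε.isPWO_support hAS X W (fun l => e l)
      hX hW e.strictMono ?_
    have : (fun l => X l + W l) = fun _ => g0 := funext fun l => hXW l
    rw [this]
    exact antitone_const

/-- Order-mirrored form of the paper's corollary of Neumann's lemma: if
`a' < a + s` for all `a, a' ∈ A` and `s ∈ S`, the supports of the `a_i` are
contained in `A`, and the support of `ε` is contained in `S`, then the family
`(a_i · ε^i)_{i ∈ ℕ}` is summable. -/
theorem power_series_summable {Γ R : Type*} [AddCommGroup Γ] [LinearOrder Γ] [IsOrderedAddMonoid Γ] [CommRing R]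
    (A S : Set Γ)
    (hAS : ∀ a ∈ A, ∀ a' ∈ A, ∀ s ∈ S, a' < a + s)
    (a : ℕ → HahnSeries Γ R) (ha : ∀ i, (a i).support ⊆ A)
    (ε : HahnSeries Γ R) (hε : ε.support ⊆ S) :
    IsSummable (fun i : ℕ => a i * ε ^ i) := by
  exact power_series_summable' A S hAS a ha ε hε
end

section
/- Let Γ be a linearly ordered (additive) abelian group, R a commutative ring, and let A, S ⊆ Γ be subsets such that a' < a + s for all a, a' ∈ A and all s ∈ S. Let I be a set and let (a_{i,j})_{(i,j)∈I×ℕ} be a family of Hahn series in HahnSeries Γ R with supp(a_{i,j}) ⊆ A for all (i,j), such that for each fixed j ∈ ℕ the family (a_{i,j})_{i∈I} is summable. Let ε ∈ HahnSeries Γ R with supp(ε) ⊆ S. Then the family (a_{i,j} · ε^j)_{(i,j)∈I×ℕ} is summable. -/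
open Set Pointwise

/-- Auxiliary: if `C` is well-ordered, `t0 > 0` and every two elements of `A` differ by
less than `t0`, then a fixed `g` can be written as `b + j • t0 + c` with `b ∈ A`, `c ∈ C`
for only finitely many `j`. -/
theorem aux_finite_j {Γ : Type*} [AddCommGroup Γ] [LinearOrder Γ] [IsOrderedAddMonoid Γ]
    (A C : Set Γ) (hC : C.IsPWO) (t0 : Γ) (ht0pos : 0 < t0)
    (hdiff : ∀ b ∈ A, ∀ b' ∈ A, b < b' + t0) (g : Γ) :
    {j : ℕ | ∃ b ∈ A, ∃ c ∈ C, g = b + j • t0 + c}.Finite := by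
  classical
  by_contra hJ
  have hJ' : {j : ℕ | ∃ b ∈ A, ∃ c ∈ C, g = b + j • t0 + c}.Infinite := hJ
  have := hJ'.to_subtype
  let e := Nat.Subtype.orderIsoOfNat {j : ℕ | ∃ b ∈ A, ∃ c ∈ C, g = b + j • t0 + c}
  have hdata : ∀ k : ℕ, ∃ b, b ∈ A ∧ ∃ c, c ∈ C ∧ g = b + ((e k : ℕ)) • t0 + c := by
    intro k
    obtain ⟨b, hb, c, hc, h⟩ := (e k).2
    exact ⟨b, hb, c, hc, h⟩
  choose b hbA c hcC hg using hdata
  obtain ⟨k, l, hkl, hcle⟩ := Set.PartiallyWellOrderedOn.exists_lt hC (f := fun k => c k) (fun k => hcC k)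
  have hjlt : (e k : ℕ) < (e l : ℕ) := by
    exact_mod_cast e.strictMono hkl
  have h2 : ((e k : ℕ) + 1) • t0 ≤ (e l : ℕ) • t0 := nsmul_le_nsmul_left ht0pos.le hjlt
  have key : b l + ((e k : ℕ) + 1) • t0 + c k ≤ b k + (e k : ℕ) • t0 + c k := by
    calc b l + ((e k : ℕ) + 1) • t0 + c k
        ≤ b l + (e l : ℕ) • t0 + c l := add_le_add (add_le_add_right h2 _) hcle
      _ = g := (hg l).symm
      _ = b k + (e k : ℕ) • t0 + c k := hg k
  have e1 : b l + ((e k : ℕ) + 1) • t0 + c k = (b l + t0) + ((e k : ℕ) • t0 + c k) := by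
    rw [succ_nsmul]; abel
  have e2 : b k + (e k : ℕ) • t0 + c k = b k + ((e k : ℕ) • t0 + c k) := by abel
  rw [e1, e2] at key
  exact (hdiff _ (hbA k) _ (hbA l)).not_ge (le_of_add_le_add_right key)

/-- Order-mirrored form of the paper's double-index summation lemma: if
`a' < a + s` for all `a, a' ∈ A` and `s ∈ S`, the supports of the `a_{i,j}` are
contained in `A`, each column family `(a_{i,j})_{i ∈ I}` is summable, and the
support of `ε` is contained in `S`, then the family `(a_{i,j} · ε^j)_{(i,j) ∈ I × ℕ}`
is summable. -/
theorem double_index_summable {Γ R I : Type*} [AddCommGroup Γ] [LinearOrder Γ] [IsOrderedAddMonoid Γ] [CommRing R]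
    (A S : Set Γ)
    (hAS : ∀ a ∈ A, ∀ a' ∈ A, ∀ s ∈ S, a' < a + s)
    (f : I × ℕ → HahnSeries Γ R) (hsupp : ∀ p : I × ℕ, (f p).support ⊆ A)
    (hcol : ∀ j : ℕ, IsSummable (fun i : I => f (i, j)))
    (ε : HahnSeries Γ R) (hε : ε.support ⊆ S) :
    IsSummable (fun p : I × ℕ => f p * ε ^ p.2) := by
  classical
  by_cases hA : A.Nonempty
  swap
  · have hf0 : ∀ p : I × ℕ, f p = 0 := by
      intro p
      rw [← HahnSeries.support_eq_empty_iff]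
      exact Set.eq_empty_of_subset_empty
        (by simpa [Set.not_nonempty_iff_eq_empty.mp hA] using hsupp p)
    constructor
    · simp [hf0]
    · intro g; simp [hf0]
  obtain ⟨a0, ha0⟩ := hA
  by_cases hez : ε = 0
  · subst hez
    constructor
    · apply (hcol 0).1.mono
      intro g hg
      simp only [Set.mem_iUnion] at hg ⊢
      obtain ⟨⟨i, j⟩, hp⟩ := hg
      cases j with
      | zero => exact ⟨i, by simpa using hp⟩
      | succ j => simp [zero_pow] at hp
    · intro g
      apply (((hcol 0).2 g).image (fun i => ((i, 0) : I × ℕ))).subset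
      rintro ⟨i, j⟩ hp
      cases j with
      | zero => exact ⟨i, by simpa using hp, rfl⟩
      | succ j => simp [zero_pow] at hp
  -- main case
  have hTne : ε.support.Nonempty := HahnSeries.support_nonempty_iff.mpr hez
  set t0 := ε.isWF_support.min hTne with ht0def
  have ht0T : t0 ∈ ε.support := ε.isWF_support.min_mem hTne
  have ht0min : ∀ t ∈ ε.support, t0 ≤ t := fun t ht => ε.isWF_support.min_le hTne ht
  have ht0S : t0 ∈ S := hε ht0T
  have ht0pos : 0 < t0 := (lt_add_iff_pos_right a0).mp (hAS a0 ha0 a0 ha0 t0 ht0S)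
  have hdiff : ∀ b ∈ A, ∀ b' ∈ A, b < b' + t0 := fun b hb b' hb' => hAS b' hb' b hb t0 ht0S
  set C : Set Γ :=
    ((AddSubmonoid.closure ((fun t => t - t0) '' ε.support) : AddSubmonoid Γ) : Set Γ)
    with hCdef
  have hCpwo : C.IsPWO := by
    have him : ((fun t => t - t0) '' ε.support).IsPWO := by
      have heq : (fun t => t - t0) '' ε.support = ε.support + ({-t0} : Set Γ) := by
        ext x; simp [Set.mem_add, sub_eq_add_neg]
      rw [heq]
      exact ε.isPWO_support.add (Set.finite_singleton _).isPWO
    exact him.addSubmonoid_closure (by rintro x ⟨t, ht, rfl⟩; simpa using ht0min t ht)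
  have hCzero : (0 : Γ) ∈ C := AddSubmonoid.zero_mem _
  have hCadd : ∀ x ∈ C, ∀ y ∈ C, x + y ∈ C := fun x hx y hy => AddSubmonoid.add_mem _ hx hy
  -- decomposition of supports of powers of ε
  have hpow : ∀ (j : ℕ) (g : Γ), g ∈ (ε ^ j).support → ∃ c ∈ C, g = j • t0 + c := by
    intro j
    induction j with
    | zero =>
      intro g hg
      rw [pow_zero] at hg
      have hg0 : g = 0 := by
        by_contra h
        simp [HahnSeries.coeff_one, h, HahnSeries.mem_support] at hg
      exact ⟨0, hCzero, by simp [hg0]⟩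
    | succ j ih =>
      intro g hg
      rw [pow_succ] at hg
      obtain ⟨h, hh, t, ht, rfl⟩ := Set.mem_add.mp (HahnSeries.support_mul_subset hg)
      obtain ⟨c, hc, rfl⟩ := ih h hh
      refine ⟨c + (t - t0), hCadd _ hc _ (AddSubmonoid.subset_closure ⟨t, ht, rfl⟩), ?_⟩
      rw [succ_nsmul]
      abel
  -- decomposition of the supports of the family members
  have hdec : ∀ (p : I × ℕ) (g : Γ), (f p * ε ^ p.2).coeff g ≠ 0 →
      ∃ b ∈ A, ∃ c ∈ C, g = b + p.2 • t0 + c := by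
    intro p g hg
    have hg' : g ∈ (f p * ε ^ p.2).support := hg
    obtain ⟨b, hb, h, hh, rfl⟩ := Set.mem_add.mp (HahnSeries.support_mul_subset hg')
    obtain ⟨c, hc, rfl⟩ := hpow p.2 h hh
    exact ⟨b, hsupp p hb, c, hc, (add_assoc _ _ _).symm⟩
  -- column families are summable families in the sense of Mathlib
  have hcolS : ∀ j : ℕ, ∃ s : HahnSeries.SummableFamily Γ R I, ∀ i, s i = f (i, j) * ε ^ j := by
    intro j
    refine ⟨(ε ^ j) • (⟨fun i => f (i, j), (hcol j).1, (hcol j).2⟩ :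
      HahnSeries.SummableFamily Γ R I), fun i => ?_⟩
    rw [HahnSeries.SummableFamily.smul_apply, HahnSeries.of_symm_smul_of_eq_mul]
    exact mul_comm _ _
  have hcolPWO : ∀ j : ℕ, (⋃ i, (f (i, j) * ε ^ j).support).IsPWO := by
    intro j
    obtain ⟨s, hs⟩ := hcolS j
    have h := s.isPWO_iUnion_support
    simpa only [hs] using h
  have hcolFin : ∀ (j : ℕ) (g : Γ), {i : I | (f (i, j) * ε ^ j).coeff g ≠ 0}.Finite := by
    intro j g
    obtain ⟨s, hs⟩ := hcolS j
    have h : {a | (s a).coeff g ≠ 0}.Finite := s.finite_co_support' g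
    simpa only [hs] using h
  constructor
  · -- partial well-orderedness of the union of supports
    apply Set.partiallyWellOrderedOn_iff_exists_lt.mpr; intro u hu
    have h1 : ∀ n, ∃ p : I × ℕ, u n ∈ (f p * ε ^ p.2).support := fun n =>
      Set.mem_iUnion.mp (hu n)
    choose p hp using h1
    have h2 : ∀ n, ∃ b, b ∈ A ∧ ∃ c, c ∈ C ∧ u n = b + (p n).2 • t0 + c := by
      intro n
      obtain ⟨b, hb, c, hc, h⟩ := hdec (p n) (u n) (hp n)
      exact ⟨b, hb, c, hc, h⟩
    choose b hbA c hcC hueq using h2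
    by_cases hrep : ∃ v : ℕ, {n : ℕ | (p n).2 = v}.Infinite
    · obtain ⟨v, hv⟩ := hrep
      have := hv.to_subtype
      let e := Nat.Subtype.orderIsoOfNat {n : ℕ | (p n).2 = v}
      have hmem : ∀ k : ℕ, u (e k) ∈ ⋃ i : I, (f (i, v) * ε ^ v).support := by
        intro k
        have hk : (p ((e k : ℕ))).2 = v := (e k).2
        refine Set.mem_iUnion.mpr ⟨(p ((e k : ℕ))).1, ?_⟩
        have hpe : ((p ((e k : ℕ))).1, v) = p ((e k : ℕ)) := Prod.ext rfl hk.symm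
        have h' := hp ((e k : ℕ))
        rw [hk] at h'
        rw [hpe]
        exact h'
      obtain ⟨k, l, hkl, hle⟩ := Set.PartiallyWellOrderedOn.exists_lt (hcolPWO v) (f := fun k => u ((e k : ℕ))) hmem
      exact ⟨(e k : ℕ), (e l : ℕ), by exact_mod_cast e.strictMono hkl, hle⟩
    · push_neg at hrep
      have hNpwo : (Set.univ : Set ℕ).IsPWO := (Set.isWF_univ_iff.mpr ⟨wellFounded_lt⟩).isPWO
      have hprod : ((Set.univ : Set ℕ) ×ˢ C).IsPWO := hNpwo.prod hCpwo
      obtain ⟨ψ, hψ⟩ := hprod.exists_monotone_subseq (f := fun n => ((p n).2, c n))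
        (fun n => ⟨Set.mem_univ _, hcC n⟩)
      by_cases hstrict : ∃ k l : ℕ, k < l ∧ (p (ψ k)).2 < (p (ψ l)).2
      · obtain ⟨k, l, hkl, hjlt⟩ := hstrict
        have hcle : c (ψ k) ≤ c (ψ l) := (hψ (le_of_lt hkl)).2
        refine ⟨ψ k, ψ l, ψ.strictMono hkl, ?_⟩
        rw [hueq (ψ k), hueq (ψ l)]
        have h1' : b (ψ k) < b (ψ l) + t0 := hdiff _ (hbA (ψ k)) _ (hbA (ψ l))
        have h2' : ((p (ψ k)).2 + 1) • t0 ≤ (p (ψ l)).2 • t0 :=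
          nsmul_le_nsmul_left ht0pos.le hjlt
        have e1 : b (ψ l) + t0 + (p (ψ k)).2 • t0 + c (ψ k)
            = b (ψ l) + ((p (ψ k)).2 + 1) • t0 + c (ψ k) := by
          rw [succ_nsmul]; abel
        calc b (ψ k) + (p (ψ k)).2 • t0 + c (ψ k)
            ≤ b (ψ l) + t0 + (p (ψ k)).2 • t0 + c (ψ k) :=
              (add_le_add_left (add_le_add_left h1'.le _) _)
          _ = b (ψ l) + ((p (ψ k)).2 + 1) • t0 + c (ψ k) := e1
          _ ≤ b (ψ l) + (p (ψ l)).2 • t0 + c (ψ l) :=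
              add_le_add (add_le_add_right h2' _) hcle
      · push_neg at hstrict
        exfalso
        have hconst : ∀ k, (p (ψ k)).2 = (p (ψ 0)).2 := by
          intro k
          rcases Nat.eq_zero_or_pos k with h | h
          · rw [h]
          · exact le_antisymm (hstrict 0 k h) ((hψ (Nat.zero_le k)).1)
        exact Set.not_infinite.mpr (hrep ((p (ψ 0)).2))
          (Set.infinite_of_injective_forall_mem ψ.injective (fun k => hconst k))
  · -- finite co-support
    intro g
    have hJfin : {j : ℕ | ∃ i : I, (f (i, j) * ε ^ j).coeff g ≠ 0}.Finite := by
      apply (aux_finite_j A C hCpwo t0 ht0pos hdiff g).subset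
      rintro j ⟨i, hi⟩
      exact hdec (i, j) g hi
    apply Set.Finite.subset
      (Set.Finite.biUnion hJfin (fun j _ => ((hcolFin j g).image (fun i => ((i, j) : I × ℕ)))))
    rintro ⟨i, j⟩ h
    have h' : (f (i, j) * ε ^ j).coeff g ≠ 0 := h
    exact Set.mem_biUnion ⟨i, h'⟩ ⟨i, h', rfl⟩
end

section
/- Let Γ be a linearly ordered (additive) abelian group, I a set, and (ε_i)_{i∈I} a summable family of Hahn series in HahnSeries Γ ℝ such that supp(ε_i) ⊆ {g ∈ Γ : g > 0} for every i ∈ I. For each i ∈ I let P_i(X) = ∑_{n=1}^{∞} a_{i,n} X^n be a formal power series with real coefficients and zero constant term, and let P_i(ε_i) := ∑_{n≥1} a_{i,n} ε_i^n (this sum exists, since (a_{i,n} ε_i^n)_{n≥1} is summable by Neumann's lemma, because each ε_i has strictly positive order). Then the family (P_i(ε_i))_{i∈I} is summable. -/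
open HahnSeries

section

variable {Γ R α β : Type*} [AddCommGroup Γ] [LinearOrder Γ] [IsOrderedAddMonoid Γ]
  [CommRing R]

namespace IsSummable

theorem of_support_subset {f : α → HahnSeries Γ R} {f' : β → HahnSeries Γ R}
    (hf : IsSummable f) (e : β → α) (he : Set.InjOn e {j | f' j ≠ 0})
    (hsupp : ∀ j, (f' j).support ⊆ (f (e j)).support) : IsSummable f' := by
  refine ⟨hf.1.mono (Set.iUnion_subset fun j =>
    (hsupp j).trans (Set.subset_iUnion (fun i => (f i).support) (e j))), fun g => ?_⟩
  have hne : {j | (f' j).coeff g ≠ 0} ⊆ {j | f' j ≠ 0} := fun j hj h0 => hj (by simp [h0])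
  refine Set.Finite.of_finite_image ((hf.2 g).subset ?_) (he.mono hne)
  rintro _ ⟨j, hj, rfl⟩
  exact hsupp j hj

theorem sumOf_curry {F : α × β → HahnSeries Γ R} (hF : IsSummable F)
    (h : ∀ a, IsSummable fun b => F (a, b)) :
    IsSummable fun a => sumOf (fun b => F (a, b)) (h a) := by
  refine ⟨hF.1.mono (Set.iUnion_subset fun a => SummableFamily.support_hsum_subset.trans
    (Set.iUnion_subset fun b => Set.subset_iUnion (fun p => (F p).support) (a, b))), fun g => ?_⟩
  refine ((hF.2 g).image Prod.fst).subset fun a ha => ?_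
  obtain ⟨b, hb⟩ : ∃ b, (F (a, b)).coeff g ≠ 0 := by
    by_contra! h0
    exact ha (SummableFamily.coeff_hsum.trans (finsum_eq_zero_of_forall_eq_zero h0))
  exact ⟨(a, b), hb, rfl⟩

end IsSummable

theorem isSummable_pow_succ {ε : α → HahnSeries Γ R} (hε : IsSummable ε)
    (hpos : ∀ i, (ε i).support ⊆ {g : Γ | 0 < g}) :
    IsSummable fun p : α × ℕ => ε p.1 ^ (p.2 + 1) := by
  set S := ⋃ i, (ε i).support
  have hS : ∀ s ∈ S, 0 < s := fun s hs => by
    obtain ⟨i, hi⟩ := Set.mem_iUnion.1 hs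
    exact hpos i hi
  set M : Set Γ := (AddSubmonoid.closure S : Set Γ)
  have hM : M.IsPWO := hε.1.addSubmonoid_closure fun s hs => (hS s hs).le
  have hsupp : ∀ p : α × ℕ, (ε p.1 ^ (p.2 + 1)).support ⊆ M := fun p =>
    (SummableFamily.support_pow_subset_closure _ _).trans
      (AddSubmonoid.closure_mono (Set.subset_iUnion (fun i => (ε i).support) p.1))
  refine ⟨hM.mono (Set.iUnion_subset hsupp), fun g => ?_⟩
  by_cases hg : g ∈ M
  swap
  · exact Set.finite_empty.subset fun p hp => hg (hsupp p hp)
  refine Set.WellFoundedOn.induction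
    (P := fun y => {p : α × ℕ | (ε p.1 ^ (p.2 + 1)).coeff y ≠ 0}.Finite) hM.isWF hg
    fun y _ ih => ?_
  have hcover : {p : α × ℕ | (ε p.1 ^ (p.2 + 1)).coeff y ≠ 0} ⊆
      (fun i => (i, 0)) '' {i | (ε i).coeff y ≠ 0} ∪
        ⋃ st ∈ Finset.antidiagonal hε.1 hM y,
          Prod.map id Nat.succ '' {p : α × ℕ | (ε p.1 ^ (p.2 + 1)).coeff st.2 ≠ 0} := by
    rintro ⟨i, _ | n⟩ hy
    · exact Or.inl ⟨i, by simpa using hy, rfl⟩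
    · rw [Set.mem_ofPred_eq, pow_succ'] at hy
      obtain ⟨s, hs, t, ht, rfl⟩ := support_mul_subset hy
      refine Or.inr (Set.mem_biUnion (x := (s, t)) ?_ ⟨(i, n), ht, rfl⟩)
      exact Finset.mem_antidiagonal.2 ⟨Set.mem_iUnion.2 ⟨i, hs⟩, hsupp (i, n) ht, rfl⟩
  refine (((hε.2 y).image _).union ((Finset.antidiagonal hε.1 hM y).finite_toSet.biUnion
    fun st hst => (ih st.2 ?_ ?_).image _)).subset hcover <;>
    obtain ⟨hs, ht, rfl⟩ := Finset.mem_antidiagonal.1 hst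
  · exact ht
  · exact lt_add_of_pos_left _ (hS _ hs)

theorem isSummable_C_mul_pow {ε : α → HahnSeries Γ R} (hε : IsSummable ε)
    (hpos : ∀ i, (ε i).support ⊆ {g : Γ | 0 < g}) {c : α → ℕ → R}
    (hc : ∀ i, c i 0 = 0) :
    IsSummable fun p : α × ℕ => C (c p.1 p.2) * ε p.1 ^ p.2 := by
  have hne : ∀ i n, C (c i n) * ε i ^ n ≠ 0 → n ≠ 0 := by
    rintro i n hn rfl
    simp [hc] at hn
  -- `p.2 - 1` truncates at `0`, but the terms with exponent `0` vanish.
  refine (isSummable_pow_succ hε hpos).of_support_subset (fun p => (p.1, p.2 - 1)) ?_ ?_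
  · rintro ⟨i, m⟩ hm ⟨j, n⟩ hn h
    have hm0 := hne i m hm
    have hn0 := hne j n hn
    simp only [Prod.mk.injEq] at h ⊢
    exact ⟨h.1, by omega⟩
  · rintro ⟨i, _ | n⟩
    · simp [hc]
    · rw [C_mul_eq_smul]
      exact support_smul_subset _ _

end

/-- If `(ε_i)_{i ∈ I}` is a summable family of Hahn series with real coefficients,
each with support contained in the positive part of `Γ`, and `P_i(X) = ∑_{n ≥ 1} a_{i,n} Xⁿ`
are real power series with zero constant term, then each `P_i(ε_i) = ∑_{n} a_{i,n} ε_iⁿ`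
exists (the family `(a_{i,n} ε_iⁿ)ₙ` is summable) and the family `(P_i(ε_i))_{i ∈ I}`
is summable. -/
theorem power_series_family_summable {Γ I : Type*} [AddCommGroup Γ] [LinearOrder Γ] [IsOrderedAddMonoid Γ]
    (ε : I → HahnSeries Γ ℝ) (hsum : IsSummable ε)
    (hpos : ∀ i, (ε i).support ⊆ {g : Γ | 0 < g})
    (a : I → ℕ → ℝ) (ha0 : ∀ i, a i 0 = 0) :
    ∃ h : ∀ i : I, IsSummable (fun n : ℕ => HahnSeries.C (a i n) * ε i ^ n),
      IsSummable (fun i : I =>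
        sumOf (fun n : ℕ => HahnSeries.C (a i n) * ε i ^ n) (h i)) := by
  have hF := isSummable_C_mul_pow hsum hpos ha0
  have hinner : ∀ i, IsSummable fun n => C (a i n) * ε i ^ n := fun i =>
    hF.of_support_subset (Prod.mk i) (Prod.mk_right_injective i).injOn fun _ => subset_rfl
  exact ⟨hinner, hF.sumOf_curry hinner⟩
end

section
/- Let G be a linearly ordered abelian group (written multiplicatively) and let Γ₁, Γ₂ be subgroups of G such that a < b for every a ∈ Γ₁ and every b ∈ Γ₂ with 1 < b. Then Γ₁ ∩ Γ₂ = {1}, the map Γ₁ × Γ₂ → G, (a,b) ↦ a·b, is an injective group homomorphism with image the subgroup Γ₁Γ₂, and it is an order isomorphism onto Γ₁Γ₂ when Γ₁ × Γ₂ is equipped with the reverse lexicographic order: (a,b) ≤ (a',b') if and only if b < b', or b = b' and a ≤ a'. -/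
/-- Let `G` be a linearly ordered abelian group (multiplicative) and `Γ₁, Γ₂ ≤ G`
subgroups with `Γ₁ < Γ₂^{>1}`.  Then `Γ₁ ∩ Γ₂ = {1}`, the multiplication map
`Γ₁ × Γ₂ → G, (a, b) ↦ a * b` is an injective group homomorphism with image the
subgroup `Γ₁Γ₂ = Γ₁ ⊔ Γ₂`, and it is an order isomorphism onto its image when
`Γ₁ × Γ₂` carries the reverse lexicographic order (second coordinate dominant). -/
theorem subgroup_product_reverse_lex {G : Type*} [CommGroup G] [LinearOrder G]
    [IsOrderedMonoid G]
    (Γ₁ Γ₂ : Subgroup G)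
    (h : ∀ a ∈ Γ₁, ∀ b ∈ Γ₂, 1 < b → a < b) :
    Γ₁ ⊓ Γ₂ = ⊥ ∧
    Function.Injective (fun p : Γ₁ × Γ₂ => (p.1 : G) * (p.2 : G)) ∧
    (∀ p q : Γ₁ × Γ₂,
        ((p.1 * q.1 : Γ₁) : G) * ((p.2 * q.2 : Γ₂) : G) =
          ((p.1 : G) * (p.2 : G)) * ((q.1 : G) * (q.2 : G))) ∧
    Set.range (fun p : Γ₁ × Γ₂ => (p.1 : G) * (p.2 : G)) = ↑(Γ₁ ⊔ Γ₂) ∧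
    (∀ p q : Γ₁ × Γ₂,
        (p.1 : G) * (p.2 : G) ≤ (q.1 : G) * (q.2 : G) ↔
          ((p.2 : G) < (q.2 : G) ∨ (p.2 = q.2 ∧ (p.1 : G) ≤ (q.1 : G)))) := by
  -- key strict lemma: b < b' implies a*b < a'*b'
  have key : ∀ a ∈ Γ₁, ∀ a' ∈ Γ₁, ∀ b ∈ Γ₂, ∀ b' ∈ Γ₂, b < b' →
      a * b < a' * b' := by
    intro a ha a' ha' b hb b' hb' hlt
    have h1 : a * a'⁻¹ ∈ Γ₁ := Γ₁.mul_mem ha (Γ₁.inv_mem ha')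
    have h2 : b' * b⁻¹ ∈ Γ₂ := Γ₂.mul_mem hb' (Γ₂.inv_mem hb)
    have h3 : (1 : G) < b' * b⁻¹ := by simpa using mul_lt_mul_left hlt b⁻¹
    have hk := h _ h1 _ h2 h3
    calc a * b = a * a'⁻¹ * (a' * b) := by rw [mul_assoc, inv_mul_cancel_left]
      _ < b' * b⁻¹ * (a' * b) := mul_lt_mul_left hk _
      _ = a' * b' := by
          rw [mul_comm b' b⁻¹, mul_assoc b⁻¹, mul_comm a' b, ← mul_assoc b',
            mul_comm b' b, mul_assoc b, ← mul_assoc b⁻¹, inv_mul_cancel, one_mul,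
            mul_comm b']
  have order : ∀ p q : Γ₁ × Γ₂,
      (p.1 : G) * (p.2 : G) ≤ (q.1 : G) * (q.2 : G) ↔
        ((p.2 : G) < (q.2 : G) ∨ (p.2 = q.2 ∧ (p.1 : G) ≤ (q.1 : G))) := by
    intro p q
    constructor
    · intro hle
      rcases lt_trichotomy (p.2 : G) (q.2 : G) with hlt | heq | hgt
      · exact Or.inl hlt
      · exact Or.inr ⟨Subtype.ext heq, by rwa [heq, mul_le_mul_iff_right] at hle⟩
      · exact absurd hle (not_le.mpr (key _ q.1.2 _ p.1.2 _ q.2.2 _ p.2.2 hgt))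
    · rintro (hlt | ⟨heq, hle⟩)
      · exact (key _ p.1.2 _ q.1.2 _ p.2.2 _ q.2.2 hlt).le
      · rw [Subtype.ext_iff] at heq; rw [heq]
        exact mul_le_mul_left hle _
  refine ⟨?_, ?_, ?_, ?_, order⟩
  · ext x
    simp only [Subgroup.mem_inf, Subgroup.mem_bot]
    constructor
    · rintro ⟨h1, h2⟩
      by_contra hx
      rcases lt_or_gt_of_ne hx with hlt | hgt
      · have h3 : (1 : G) < x⁻¹ := by simpa using inv_lt_inv_iff.mpr hlt
        exact lt_irrefl _ (h _ (Γ₁.inv_mem h1) _ (Γ₂.inv_mem h2) h3)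
      · exact lt_irrefl _ (h _ h1 _ h2 hgt)
    · rintro rfl; exact ⟨Γ₁.one_mem, Γ₂.one_mem⟩
  · intro p q hpq
    simp only at hpq
    have h1 := (order p q).mp hpq.le
    have h2 := (order q p).mp hpq.ge
    rcases h1 with hlt | ⟨heq, hle⟩
    · rcases h2 with hlt' | ⟨heq', _⟩
      · exact absurd hlt' (not_lt.mpr hlt.le)
      · exact absurd hlt (heq' ▸ lt_irrefl _)
    · rcases h2 with hlt' | ⟨_, hle'⟩
      · exact absurd hlt' (heq ▸ lt_irrefl _)
      · exact Prod.ext (Subtype.ext (le_antisymm hle hle')) heq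
  · intro p q
    push_cast
    exact mul_mul_mul_comm _ _ _ _
  · ext x
    simp only [Set.mem_range, SetLike.mem_coe, Subgroup.mem_sup]
    constructor
    · rintro ⟨⟨a, b⟩, rfl⟩
      exact ⟨a, a.2, b, b.2, rfl⟩
    · rintro ⟨y, hy, z, hz, rfl⟩
      exact ⟨(⟨y, hy⟩, ⟨z, hz⟩), rfl⟩
end

section
/- Let Γ and Γ' be linearly ordered (additive) abelian groups and R a commutative ring. Then there is a ring isomorphism Φ : HahnSeries (Γ ×ₗ Γ') R ≃ HahnSeries Γ (HahnSeries Γ' R), where Γ ×ₗ Γ' carries the lexicographic order with the first coordinate dominant, determined by ((Φ x) g) g' = x (g, g') for all g ∈ Γ, g' ∈ Γ'; i.e., Φ sends ∑_{(g,g')} r_{(g,g')} T^{(g,g')} to ∑_g (∑_{g'} r_{(g,g')} T^{g'}) T^g. -/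
/-!
The coefficient of `x * y` at `(g, g')` is a sum over pairs `((a, p), (b, q))` of support
points with `(a + b, p + q) = (g, g')`. Grouping the terms by `(a, b)` turns it into the sum,
over `a + b = g`, of the coefficients at `g'` of the products of the slices `x(a, ·)` and
`y(b, ·)`, which is the coefficient of the iterated product.
-/

open Finset

namespace HahnSeries

variable {Γ Γ' R : Type*}

section PartialOrder

variable [PartialOrder Γ] [PartialOrder Γ']

@[simp]
lemma coeff_coeff_toIterate [Zero R] (x : R⟦Γ ×ₗ Γ'⟧) (g : Γ) (g' : Γ') :
    (x.toIterate.coeff g).coeff g' = x.coeff (toLex (g, g')) := rfl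

lemma coeff_toIterate_ne_zero [Zero R] {x : R⟦Γ ×ₗ Γ'⟧} {g : Γ} {g' : Γ'}
    (h : x.coeff (toLex (g, g')) ≠ 0) : x.toIterate.coeff g ≠ 0 :=
  ne_of_apply_ne (coeff · g') h

lemma toIterate_add [AddMonoid R] (x y : R⟦Γ ×ₗ Γ'⟧) :
    (x + y).toIterate = x.toIterate + y.toIterate := rfl

end PartialOrder

variable [AddCommMonoid Γ] [PartialOrder Γ] [IsOrderedCancelAddMonoid Γ]
  [AddCommMonoid Γ'] [PartialOrder Γ'] [IsOrderedCancelAddMonoid Γ']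
  [NonUnitalNonAssocSemiring R]

lemma toIterate_mul (x y : R⟦Γ ×ₗ Γ'⟧) :
    (x * y).toIterate = x.toIterate * y.toIterate := by
  ext g g'
  simp only [coeff_coeff_toIterate, coeff_mul, coeff_sum, sum_sigma']
  refine sum_nbij' (fun ij => ⟨((ofLex ij.1).1, (ofLex ij.2).1), ((ofLex ij.1).2, (ofLex ij.2).2)⟩)
    (fun p => (toLex (p.1.1, p.2.1), toLex (p.1.2, p.2.2))) ?_ ?_ (fun _ _ => rfl) (fun _ _ => rfl)
    (fun _ _ => rfl)
  · rintro ⟨⟨a, p⟩, ⟨b, q⟩⟩ h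
    simp only [Finset.mem_antidiagonal, mem_sigma, mem_support] at h ⊢
    obtain ⟨hx, hy, hsum⟩ := h
    obtain ⟨hg, hg'⟩ := Prod.ext_iff.mp (congrArg ofLex hsum)
    exact ⟨⟨coeff_toIterate_ne_zero hx, coeff_toIterate_ne_zero hy, hg⟩, hx, hy, hg'⟩
  · rintro ⟨⟨a, b⟩, ⟨p, q⟩⟩ h
    simp only [Finset.mem_antidiagonal, mem_sigma, mem_support, coeff_coeff_toIterate] at h ⊢
    obtain ⟨⟨-, -, hg⟩, hx, hy, hg'⟩ := h
    exact ⟨hx, hy, congrArg toLex (Prod.ext hg hg')⟩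

def iterateRingEquiv : R⟦Γ ×ₗ Γ'⟧ ≃+* R⟦Γ'⟧⟦Γ⟧ :=
  { iterateEquiv.symm with
    map_mul' := toIterate_mul
    map_add' := toIterate_add }

end HahnSeries

/-- Hahn series over a lexicographic product of exponent groups (first coordinate
dominant) are ring-isomorphic to iterated Hahn series: there is a ring isomorphism
`Φ : HahnSeries (Γ ×ₗ Γ') R ≃+* HahnSeries Γ (HahnSeries Γ' R)` with
`((Φ x) g) g' = x (g, g')` for all exponents `g, g'`. -/
theorem hahnSeries_lex_iterate {Γ Γ' R : Type*}
    [AddCommGroup Γ] [LinearOrder Γ] [IsOrderedAddMonoid Γ]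
    [AddCommGroup Γ'] [LinearOrder Γ'] [IsOrderedAddMonoid Γ'] [CommRing R] :
    ∃ Φ : HahnSeries (Γ ×ₗ Γ') R ≃+* HahnSeries Γ (HahnSeries Γ' R),
      ∀ (x : HahnSeries (Γ ×ₗ Γ') R) (g : Γ) (g' : Γ'),
        ((Φ x).coeff g).coeff g' = x.coeff (toLex (g, g')) :=
  ⟨HahnSeries.iterateRingEquiv, HahnSeries.coeff_coeff_toIterate⟩
end

section
/- Let Γ be a linearly ordered (additive) abelian group, F a field, and x a nonzero element of the field HahnSeries Γ F of Hahn series over Γ with coefficients in F. Let d = ord(x) be the order of x, that is, the least element of supp(x). Then every g ∈ supp(x) can be written as g = (n+1)·d + s_1 + s_2 + ⋯ + s_n for some n ∈ ℕ and some (not necessarily distinct) s_1, …, s_n ∈ supp(x⁻¹); in other words, supp(x) ⊆ ⋃_{n∈ℕ} ((n+1)·d + (n-fold pointwise sumset of supp(x⁻¹))), where the n = 0 term of the union is {d}. -/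
/-- Order-mirrored form of the paper's lemma on supports of inverses: for a nonzero
Hahn series `x` over a linearly ordered abelian exponent group with coefficients in a
field, with `d = ord x` the least element of the support of `x`, every exponent `g`
in the support of `x` can be written as `g = (n+1) • d + s₁ + ⋯ + sₙ` for some `n ∈ ℕ`
and some (not necessarily distinct) `s₁, …, sₙ` in the support of `x⁻¹`. -/
theorem support_subset_of_inv {Γ F : Type*} [AddCommGroup Γ] [LinearOrder Γ] [IsOrderedAddMonoid Γ] [Field F]
    (x : HahnSeries Γ F) (hx : x ≠ 0) :
    ∀ g ∈ x.support, ∃ (n : ℕ) (s : Fin n → Γ),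
      (∀ m : Fin n, s m ∈ (x⁻¹).support) ∧
      g = (n + 1) • x.order + ∑ m : Fin n, s m := by
  intro g hg
  set d := x.order with hd
  have hxi : x⁻¹ ≠ 0 := inv_ne_zero hx
  have hmul : x * x⁻¹ = 1 := mul_inv_cancel₀ hx
  have horder : (x⁻¹).order = -d := by
    have h0 : (1 : HahnSeries Γ F).order = 0 := HahnSeries.order_one
    have := HahnSeries.order_mul hx hxi
    rw [hmul, h0] at this
    exact (eq_neg_of_add_eq_zero_right this.symm)
  -- -d ∈ supp x⁻¹
  have hnd : (-d) ∈ (x⁻¹).support := by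
    rw [← horder]
    exact HahnSeries.coeff_order_eq_zero.not.mpr hxi
  refine Set.WellFoundedOn.induction (r := (· < ·))
    (P := fun g => ∃ (n : ℕ) (s : Fin n → Γ), (∀ m : Fin n, s m ∈ (x⁻¹).support) ∧
      g = (n + 1) • d + ∑ m : Fin n, s m) x.isWF_support hg ?_
  intro g hg IH
  rcases eq_or_lt_of_le (HahnSeries.order_le_of_coeff_ne_zero hg) with heq | hlt
  · exact ⟨0, Fin.elim0, fun m => m.elim0, by simpa using heq.symm⟩
  -- g > d : use coefficient of g - d in x * x⁻¹ = 1
  have hcoeff : (x * x⁻¹).coeff (g - d) = 0 := by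
    rw [hmul, HahnSeries.coeff_one, if_neg (fun h => hlt.ne' (sub_eq_zero.mp h))]
  rw [HahnSeries.coeff_mul] at hcoeff
  set P := Finset.antidiagonal x.isPWO_support (x⁻¹).isPWO_support (g - d) with hP
  have hgmem : ((g, -d) : Γ × Γ) ∈ P := by
    rw [hP, Finset.mem_antidiagonal]
    exact ⟨hg, hnd, by abel⟩
  have hgne : x.coeff g * (x⁻¹).coeff (-d) ≠ 0 :=
    mul_ne_zero hg hnd
  -- there must be another nonzero term
  have : ∃ p ∈ P, p ≠ ((g, -d) : Γ × Γ) ∧ x.coeff p.1 * (x⁻¹).coeff p.2 ≠ 0 := by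
    by_contra hcon
    push_neg at hcon
    have : ∑ ij ∈ P, x.coeff ij.1 * (x⁻¹).coeff ij.2
        = x.coeff (g, -d).1 * (x⁻¹).coeff (g, -d).2 := by
      refine Finset.sum_eq_single_of_mem _ hgmem ?_
      intro p hp hpne
      by_contra hne
      exact hne (hcon p hp hpne)
    rw [hcoeff] at this
    exact hgne this.symm
  obtain ⟨⟨a, b⟩, hpP, hpne, hpval⟩ := this
  rw [Finset.mem_antidiagonal] at hpP
  obtain ⟨ha, hb, hab⟩ := hpP
  have hab' : a + b = g - d := hab
  have hane : a ≠ g := by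
    intro h
    apply hpne
    rw [h] at hab'
    have : b = -d := add_left_cancel (hab'.trans (sub_eq_add_neg g d))
    simp [h, this]
  have haltg : a < g := by
    have hble : -d ≤ b := by
      rw [← horder]; exact HahnSeries.order_le_of_coeff_ne_zero hb
    have hav : a = g - d - b := (eq_sub_of_add_eq' (by rw [add_comm] at hab'; exact hab'))
    rcases eq_or_lt_of_le hble with h | h
    · exfalso; apply hane; rw [hav, ← h]; abel
    · have := sub_lt_sub_left h (g - d)
      rw [← hav] at this
      calc a < g - d - -d := this
        _ = g := by abel
  obtain ⟨n, s, hs, hsum⟩ := IH a ha haltg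
  refine ⟨n + 1, Fin.cons b s, ?_, ?_⟩
  · intro m
    refine Fin.cases ?_ ?_ m
    · simpa using hb
    · intro i; simpa using hs i
  · have hga : g = a + b + d := sub_eq_iff_eq_add.mp hab'.symm
    rw [Fin.sum_cons, hga, hsum]
    simp only [succ_nsmul]
    abel
end

section
/- Let Γ be a linearly ordered (additive) abelian group, R a commutative ring, and (x_i)_{i∈I} a family of Hahn series in HahnSeries Γ R indexed by a set I. Then (x_i)_{i∈I} is summable (i.e., ⋃_{i∈I} supp(x_i) is well-ordered and for each g ∈ Γ only finitely many i ∈ I satisfy g ∈ supp(x_i)) if and only if there do not exist an injective sequence (i_n)_{n∈ℕ} in I and exponents g_n ∈ supp(x_{i_n}) (not necessarily distinct) such that g_{n+1} ≤ g_n for every n ∈ ℕ. -/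
/-!
A family fails to be summable either because a single exponent lies in infinitely many supports,
or because the union of the supports contains a strictly decreasing sequence. In the first case
the constant sequence at that exponent is a witness. In the second, pick for each term a member
of the family containing it in its support; by Ramsey's theorem for the relation `=`, a
subsequence of these indices is either constant, impossible since a single support is
well-ordered, or injective, which is a witness. Conversely, a witness inside a partially
well-ordered union has a monotone, hence constant, subsequence, so that one exponent lies in
infinitely many supports.
-/

theorem exists_orderEmbedding_const_or_injective {α : Type*} (u : ℕ → α) :
    ∃ φ : ℕ ↪o ℕ, (∀ n, u (φ n) = u (φ 0)) ∨ Function.Injective (u ∘ φ) := by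
  obtain ⟨φ, heq | hne⟩ := exists_increasing_or_nonincreasing_subseq (· = ·) u
  · refine ⟨φ, Or.inl fun n => ?_⟩
    rcases n.eq_zero_or_pos with rfl | hn
    · rfl
    · exact (heq 0 n hn).symm
  · refine ⟨φ, Or.inr fun m n h => ?_⟩
    by_contra hmn
    rcases lt_or_gt_of_ne hmn with hlt | hlt
    · exact hne m n hlt h
    · exact hne n m hlt h.symm

namespace HahnSeries

variable {Γ R I : Type*} [Zero R]

def HasAntitoneSupportSeq [PartialOrder Γ] (f : I → HahnSeries Γ R) : Prop :=
  ∃ (i : ℕ → I) (g : ℕ → Γ), Function.Injective i ∧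
    (∀ n : ℕ, g n ∈ (f (i n)).support) ∧ (∀ n : ℕ, g (n + 1) ≤ g n)

theorem exists_infinite_coeff_ne_zero_of_hasAntitoneSupportSeq [PartialOrder Γ]
    {f : I → HahnSeries Γ R} (hpwo : (⋃ i, (f i).support).IsPWO)
    (h : HasAntitoneSupportSeq f) : ∃ g : Γ, {i | (f i).coeff g ≠ 0}.Infinite := by
  obtain ⟨i, g, hinj, hsupp, hsucc⟩ := h
  obtain ⟨φ, hmono⟩ := hpwo.exists_monotone_subseq fun n => Set.mem_iUnion.2 ⟨i n, hsupp n⟩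
  have hanti : Antitone (g ∘ φ) := (antitone_nat_of_succ_le hsucc).comp_monotone φ.monotone
  have hconst : ∀ n, g (φ n) = g (φ 0) := fun n =>
    le_antisymm (hanti n.zero_le) (hmono n.zero_le)
  refine ⟨g (φ 0), (Set.infinite_range_of_injective (hinj.comp φ.injective)).mono ?_⟩
  rintro _ ⟨n, rfl⟩
  simpa [hconst n] using hsupp (φ n)

theorem hasAntitoneSupportSeq_of_infinite_coeff_ne_zero [PartialOrder Γ]
    {f : I → HahnSeries Γ R} {g : Γ} (hg : {i | (f i).coeff g ≠ 0}.Infinite) :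
    HasAntitoneSupportSeq f :=
  ⟨fun n => hg.natEmbedding _ n, fun _ => g, fun _ _ h => (hg.natEmbedding _).injective
    (Subtype.ext h), fun n => (hg.natEmbedding _ n).2, fun _ => le_rfl⟩

theorem hasAntitoneSupportSeq_of_not_isPWO [LinearOrder Γ] {f : I → HahnSeries Γ R}
    (h : ¬ (⋃ i, (f i).support).IsPWO) : HasAntitoneSupportSeq f := by
  rw [Set.isPWO_iff_isWF, Set.isWF_iff_no_descending_seq] at h
  push Not at h
  obtain ⟨g, hanti, hmem⟩ := h
  choose j hj using fun n => Set.mem_iUnion.1 (hmem n)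
  obtain ⟨φ, hconst | hinj⟩ := exists_orderEmbedding_const_or_injective j
  · refine absurd (f (j (φ 0))).isWF_support ?_
    rw [Set.isWF_iff_no_descending_seq]
    exact fun hwf => hwf (g ∘ φ) (hanti.comp_strictMono φ.strictMono) fun n => hconst n ▸ hj (φ n)
  · exact ⟨j ∘ φ, g ∘ φ, hinj, fun n => hj (φ n),
      fun n => (hanti (φ.strictMono n.lt_succ_self)).le⟩

end HahnSeries

open HahnSeries in
/-- Summability criterion (order-mirrored form): a family `(x_i)_{i ∈ I}` of Hahn
series is summable if and only if there is no injective sequence `(i_n)` in `I`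
together with exponents `g_n ∈ supp (x_{i_n})` forming a weakly decreasing sequence. -/
theorem summable_iff_no_decreasing_sequence {Γ R I : Type*}
    [AddCommGroup Γ] [LinearOrder Γ] [IsOrderedAddMonoid Γ] [CommRing R] (f : I → HahnSeries Γ R) :
    IsSummable f ↔
      ¬ ∃ (i : ℕ → I) (g : ℕ → Γ), Function.Injective i ∧
          (∀ n : ℕ, g n ∈ (f (i n)).support) ∧ (∀ n : ℕ, g (n + 1) ≤ g n) := by
  change IsSummable f ↔ ¬ HasAntitoneSupportSeq f
  constructor
  · rintro ⟨hpwo, hfin⟩ h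
    obtain ⟨g, hg⟩ := exists_infinite_coeff_ne_zero_of_hasAntitoneSupportSeq hpwo h
    exact hg (hfin g)
  · intro h
    exact ⟨not_not.1 (mt hasAntitoneSupportSeq_of_not_isPWO h),
      fun _ => not_not.1 (mt hasAntitoneSupportSeq_of_infinite_coeff_ne_zero h)⟩
end

section
/- Let M be a linearly ordered (additive) abelian group, let Γ be a subgroup of M, and let B ⊆ M be a subset such that b - b' < γ for all b, b' ∈ B and all γ ∈ Γ with 0 < γ. Let R be a commutative ring and let (x_γ)_{γ∈Γ} be a family of Hahn series in HahnSeries M R such that supp(x_γ) ⊆ B for every γ ∈ Γ and the set {γ ∈ Γ : x_γ ≠ 0} is well-ordered. Then the family (x_γ · T^γ)_{γ∈Γ} is summable, where T^γ denotes the Hahn series which is the single monomial with exponent γ and coefficient 1. Consequently, the assignment ∑_{γ∈Γ} r_γ T^γ ↦ ∑_{γ∈Γ} x_γ T^γ (for coefficient families (x_γ) as above) defines a strongly additive embedding of the Hahn series with exponents in Γ and coefficients supported in B into HahnSeries M R. -/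
open HahnSeries

section SummableFamilies

variable {Γ R ι : Type*} [AddCommGroup Γ] [LinearOrder Γ] [IsOrderedAddMonoid Γ] [CommRing R]

theorem coeff_sumOf {f : ι → HahnSeries Γ R} (hf : IsSummable f) (g : Γ) :
    (sumOf f hf).coeff g = ∑ᶠ i, (f i).coeff g :=
  SummableFamily.coeff_hsum

theorem sumOf_eq_add {f g h : ι → HahnSeries Γ R} (hf : IsSummable f) (hg : IsSummable g)
    (hh : IsSummable h) (hfgh : ∀ i, h i = f i + g i) :
    sumOf h hh = sumOf f hf + sumOf g hg := by
  obtain rfl : h = f + g := funext hfgh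
  exact SummableFamily.hsum_add (s := ⟨f, hf.1, hf.2⟩) (t := ⟨g, hg.1, hg.2⟩)

theorem coeff_mul_single_one (y : HahnSeries Γ R) (a g : Γ) :
    (y * single a (1 : R)).coeff g = y.coeff (g - a) := by
  rw [coeff_mul_single, mul_one]

end SummableFamilies

section Blocks

variable {M R : Type*} [AddCommGroup M] [LinearOrder M] [IsOrderedAddMonoid M] [CommRing R]
  {Γ : AddSubgroup M} {B : Set M}

def DifferencesBelow (B : Set M) (Γ : AddSubgroup M) : Prop :=
  ∀ b ∈ B, ∀ b' ∈ B, ∀ γ ∈ Γ, 0 < γ → b - b' < γ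

theorem DifferencesBelow.add_lt_add (hB : DifferencesBelow B Γ) {b b' : M} (hb : b ∈ B)
    (hb' : b' ∈ B) {γ γ' : Γ} (hγ : γ < γ') : b + γ < b' + γ' := by
  have h := hB b hb b' hb' (γ' - γ) (sub_mem γ'.2 γ.2) (sub_pos.2 hγ)
  rw [add_comm b']
  exact sub_lt_sub_iff.1 h

theorem DifferencesBelow.eq_of_add_eq_add (hB : DifferencesBelow B Γ) {b b' : M} (hb : b ∈ B)
    (hb' : b' ∈ B) {γ γ' : Γ} (h : b + γ = b' + γ') : γ = γ' := by
  rcases lt_trichotomy γ γ' with hlt | heq | hgt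
  · exact absurd h (hB.add_lt_add hb hb' hlt).ne
  · exact heq
  · exact absurd h (hB.add_lt_add hb' hb hgt).ne'

variable {x : Γ → HahnSeries M R}

theorem DifferencesBelow.isPWO_iUnion_support_mul_single (hB : DifferencesBelow B Γ)
    (hx : ∀ γ, (x γ).support ⊆ B) (hwx : {γ | x γ ≠ 0}.IsWF) :
    (⋃ γ : Γ, (x γ * single (γ : M) (1 : R)).support).IsPWO := by
  set T : Set (Γ ×ₗ M) := {p | (ofLex p).2 ∈ (x (ofLex p).1).support}
  have hT : T.IsPWO := by
    refine Set.PartiallyWellOrderedOn.subsetProdLex (hwx.isPWO.mono ?_)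
      fun γ ↦ (x γ).isPWO_support
    rintro _ ⟨p, hp, rfl⟩ h
    simp [T, h] at hp
  have hmono : MonotoneOn (fun p : Γ ×ₗ M ↦ (ofLex p).2 + (ofLex p).1) T := by
    rintro ⟨γ, b⟩ hb ⟨γ', b'⟩ hb' hle
    rcases Prod.Lex.toLex_le_toLex.1 hle with hlt | ⟨rfl, hbb⟩
    · exact (hB.add_lt_add (hx _ hb) (hx _ hb') hlt).le
    · exact add_le_add_left hbb _
  refine (hT.image_of_monotoneOn hmono).mono ?_
  rintro g ⟨_, ⟨γ, rfl⟩, hg⟩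
  refine ⟨toLex (γ, g - γ), ?_, sub_add_cancel g γ⟩
  simpa [T, coeff_mul_single_one] using hg

theorem DifferencesBelow.isSummable_mul_single (hB : DifferencesBelow B Γ)
    (hx : ∀ γ, (x γ).support ⊆ B) (hwx : {γ | x γ ≠ 0}.IsWF) :
    IsSummable fun γ : Γ ↦ x γ * single (γ : M) (1 : R) := by
  refine ⟨hB.isPWO_iUnion_support_mul_single hx hwx, fun g ↦ Set.Subsingleton.finite ?_⟩
  intro γ hγ γ' hγ'
  simp only [Set.mem_ofPred_eq, coeff_mul_single_one] at hγ hγ'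
  exact hB.eq_of_add_eq_add (hx γ hγ) (hx γ' hγ') (by abel)

theorem DifferencesBelow.coeff_sumOf_mul_single (hB : DifferencesBelow B Γ)
    (hx : ∀ γ, (x γ).support ⊆ B) (hwx : {γ | x γ ≠ 0}.IsWF)
    {b : M} (hb : b ∈ B) (γ : Γ) :
    (sumOf _ (hB.isSummable_mul_single hx hwx)).coeff (b + γ) = (x γ).coeff b := by
  rw [coeff_sumOf, finsum_eq_single _ γ, coeff_mul_single_one, add_sub_cancel_right]
  intro γ' hγ'
  rw [coeff_mul_single_one]
  exact Function.notMem_support.1 fun h ↦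
    hγ' (hB.eq_of_add_eq_add (hx γ' h) hb (sub_add_cancel _ _))

end Blocks

/-- Order-mirrored form of the paper's proposition on Hahn fields embedded in `No`:
let `Γ` be a subgroup of a linearly ordered abelian group `M` and `B ⊆ M` a set with
`b - b' < γ` for all `b, b' ∈ B` and all positive `γ ∈ Γ`.  Then for every coefficient
family `(x_γ)_{γ ∈ Γ}` with `supp (x_γ) ⊆ B` and well-ordered set of nonzero indices,
the family `(x_γ · T^γ)_{γ ∈ Γ}` is summable; moreover the resulting assignment
`(x_γ)_γ ↦ ∑_γ x_γ T^γ` is injective (an embedding) and additive. -/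
theorem hahn_subfield_embedding {M R : Type*} [AddCommGroup M] [LinearOrder M] [IsOrderedAddMonoid M] [CommRing R]
    (Γ : AddSubgroup M) (B : Set M)
    (hB : ∀ b ∈ B, ∀ b' ∈ B, ∀ γ ∈ Γ, 0 < γ → b - b' < γ) :
    ∃ hsum : ∀ x : Γ → HahnSeries M R, (∀ γ : Γ, (x γ).support ⊆ B) →
        {γ : Γ | x γ ≠ 0}.IsWF →
        IsSummable (fun γ : Γ => x γ * HahnSeries.single (γ : M) (1 : R)),
      (∀ (x y : Γ → HahnSeries M R)
          (hx : ∀ γ : Γ, (x γ).support ⊆ B) (hwx : {γ : Γ | x γ ≠ 0}.IsWF)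
          (hy : ∀ γ : Γ, (y γ).support ⊆ B) (hwy : {γ : Γ | y γ ≠ 0}.IsWF),
          sumOf (fun γ : Γ => x γ * HahnSeries.single (γ : M) (1 : R)) (hsum x hx hwx) =
            sumOf (fun γ : Γ => y γ * HahnSeries.single (γ : M) (1 : R)) (hsum y hy hwy) →
          x = y) ∧
      (∀ (x y : Γ → HahnSeries M R)
          (hx : ∀ γ : Γ, (x γ).support ⊆ B) (hwx : {γ : Γ | x γ ≠ 0}.IsWF)
          (hy : ∀ γ : Γ, (y γ).support ⊆ B) (hwy : {γ : Γ | y γ ≠ 0}.IsWF)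
          (hxy : ∀ γ : Γ, ((x + y) γ).support ⊆ B)
          (hwxy : {γ : Γ | (x + y) γ ≠ 0}.IsWF),
          sumOf (fun γ : Γ => (x + y) γ * HahnSeries.single (γ : M) (1 : R))
              (hsum (x + y) hxy hwxy) =
            sumOf (fun γ : Γ => x γ * HahnSeries.single (γ : M) (1 : R)) (hsum x hx hwx) +
              sumOf (fun γ : Γ => y γ * HahnSeries.single (γ : M) (1 : R)) (hsum y hy hwy)) := by
  refine ⟨fun x hx hwx ↦ DifferencesBelow.isSummable_mul_single hB hx hwx, ?_, ?_⟩
  · intro x y hx hwx hy hwy hxy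
    funext γ
    ext b
    by_cases hb : b ∈ B
    · rw [← DifferencesBelow.coeff_sumOf_mul_single hB hx hwx hb, hxy,
        DifferencesBelow.coeff_sumOf_mul_single hB hy hwy hb]
    · rw [Function.notMem_support.1 fun h ↦ hb (hx γ h),
        Function.notMem_support.1 fun h ↦ hb (hy γ h)]
  · intro x y hx hwx hy hwy hxy hwxy
    exact sumOf_eq_add _ _ _ fun γ ↦ add_mul _ _ _
end
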